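/- arXiv:2602.15136 — 4 statements merged into one kernel-verified Lean document; each statement's English description precedes it below -/
import Mathlib

section
/- For every A > 0 and every integer n ≥ 1, the following minimax identity holds: inf_{θ̂} sup_{G ∈ P([0,A])} Regret(θ̂; G) = sup_{Π ∈ P(P([0,A]))} inf_{θ̂} ∫ Regret(θ̂; G) Π(dG), where the infima range over all estimators θ̂ : ℕⁿ → [0,∞)ⁿ and P(P([0,A])) denotes the Borel probability measures on P([0,A]) (the latter equipped with the weak convergence topology). Moreover, both the outer supremum on the right-hand side and the inner infimum (attained by the hierarchical Bayes estimator θ̂^Π) are attained, so the identity holds with this supremum replaced by a maximum and the right-hand inner infimum replaced by a minimum. -/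
open MeasureTheory Real
open scoped ENNReal BigOperators

noncomputable section

open MeasureTheory Filter Topology TopologicalSpace BoundedContinuousFunction
open scoped NNReal

open MeasureTheory Filter Topology TopologicalSpace BoundedContinuousFunction
open scoped NNReal ENNReal


namespace SeqCpt

variable {Ω : Type*} [MetricSpace Ω] [CompactSpace Ω] [MeasurableSpace Ω] [BorelSpace Ω]

/-- real-valued version of an `ℝ≥0`-valued bounded continuous function, as a ContinuousMap -/
def toC (b : Ω →ᵇ NNReal) : C(Ω, ℝ) :=
  ⟨fun x => (b x : ℝ), NNReal.continuous_coe.comp b.continuous⟩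

lemma toC_apply (b : Ω →ᵇ NNReal) (x : Ω) : toC b x = (b x : ℝ) := rfl

lemma integrable_cm (h : C(Ω, ℝ)) (μ : Measure Ω) [IsFiniteMeasure μ] :
    Integrable h μ := by
  have := (mkOfCompact h).integrable μ
  exact this

lemma toC_nnrealPart (r : C(Ω, ℝ)) (hr : ∀ x, 0 ≤ r x) :
    toC ((mkOfCompact r).nnrealPart) = r := by
  ext x
  simp only [toC, nnrealPart_coeFn_eq, Function.comp_apply, mkOfCompact_apply,
    ContinuousMap.coe_mk]
  exact Real.coe_toNNReal _ (hr x)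

theorem exists_tendsto_subseq (μs : ℕ → ProbabilityMeasure Ω) :
    ∃ (ν : ProbabilityMeasure Ω) (φ : ℕ → ℕ), StrictMono φ ∧
      Tendsto (fun j => μs (φ j)) atTop (𝓝 ν) := by
  exact CompactSpace.tendsto_subseq μs

end SeqCpt


/-- The Poisson pmf with mean `θ`: `Poi(x; θ) = e^{-θ} θ^x / x!`. -/
def poiPMF (θ : ℝ) (x : ℕ) : ℝ := Real.exp (-θ) * θ ^ x / (Nat.factorial x : ℝ)

/-- `P([0,A])`: Borel probability measures on `[0, A]`, with the topology of weak convergence. -/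
abbrev Prior (A : ℝ) := ProbabilityMeasure (Set.Icc (0 : ℝ) A)

/-- The Borel σ-algebra on `P([0,A])` (w.r.t. the topology of weak convergence). -/
instance (A : ℝ) : MeasurableSpace (Prior A) := borel (Prior A)

/-- The Poisson mixture pmf `f_G(x) = ∫ e^{-θ} θ^x / x! dG(θ)`. -/
def mix {A : ℝ} (G : Prior A) (x : ℕ) : ℝ :=
  ∫ θ : Set.Icc (0 : ℝ) A, poiPMF (θ : ℝ) x ∂(G : Measure (Set.Icc (0 : ℝ) A))

/-- The Bayes estimator `θ_G(x) = (x+1) f_G(x+1) / f_G(x)` (equal to `0` when `f_G(x) = 0`,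
by the junk value of division). -/
def bayes {A : ℝ} (G : Prior A) (x : ℕ) : ℝ := ((x : ℝ) + 1) * mix G (x + 1) / mix G x

/-- The regret of an estimator, valued in `[0, ∞]`. -/
def regretE {A : ℝ} {n : ℕ} (est : (Fin n → ℕ) → Fin n → ℝ) (G : Prior A) : ℝ≥0∞ :=
  ∑' x : Fin n → ℕ,
    (∏ j, ENNReal.ofReal (mix G (x j))) *
      ENNReal.ofReal ((n : ℝ)⁻¹ * ∑ i, (est x i - bayes G (x i)) ^ 2)

/-- The hierarchical Bayes estimator of a prior-on-priors `Q`. -/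
def hbayes {A : ℝ} (Q : Measure (Prior A)) {n : ℕ} (x : Fin n → ℕ) (i : Fin n) : ℝ :=
  (∫ G, bayes G (x i) * ∏ j, mix G (x j) ∂Q) / (∫ G, ∏ j, mix G (x j) ∂Q)

/-- Estimators `ℕⁿ → [0,∞)ⁿ`. -/
def Est (n : ℕ) : Type := {f : (Fin n → ℕ) → Fin n → ℝ // ∀ x i, 0 ≤ f x i}

namespace PoiSetup

instance (A : ℝ) : BorelSpace (Prior A) := ⟨rfl⟩

variable {A : ℝ}

abbrev I (A : ℝ) := Set.Icc (0 : ℝ) A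

lemma poi_nonneg {θ : ℝ} (hθ : 0 ≤ θ) (x : ℕ) : 0 ≤ poiPMF θ x := by
  unfold poiPMF
  positivity

lemma poi_cont (x : ℕ) : Continuous fun θ : I A => poiPMF (θ : ℝ) x := by
  unfold poiPMF
  fun_prop

/-- the Poisson pmf as a continuous map on `[0,A]` -/
def poiCM (A : ℝ) (x : ℕ) : C(I A, ℝ) := ⟨fun θ => poiPMF (θ : ℝ) x, poi_cont x⟩

lemma poi_tsum {θ : ℝ} (hθ : 0 ≤ θ) :
    ∑' x : ℕ, ENNReal.ofReal (poiPMF θ x) = 1 := by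
  have hsummable : Summable fun x : ℕ => θ ^ x / (Nat.factorial x : ℝ) :=
    Real.summable_pow_div_factorial θ
  have hexp : ∑' x : ℕ, θ ^ x / (Nat.factorial x : ℝ) = Real.exp θ := by
    rw [Real.exp_eq_exp_ℝ, NormedSpace.exp_eq_tsum_div]
  have h1 : ∀ x : ℕ, poiPMF θ x = Real.exp (-θ) * (θ ^ x / (Nat.factorial x : ℝ)) := by
    intro x; unfold poiPMF; ring
  have h2 : ∑' x : ℕ, ENNReal.ofReal (poiPMF θ x)
      = ENNReal.ofReal (∑' x : ℕ, poiPMF θ x) := by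
    rw [ENNReal.ofReal_tsum_of_nonneg (fun x => poi_nonneg hθ x)]
    · exact (by simpa [funext h1] using hsummable.mul_left (Real.exp (-θ)))
  rw [h2]
  have h3 : ∑' x : ℕ, poiPMF θ x = 1 := by
    simp only [funext h1]
    rw [tsum_mul_left, hexp, ← Real.exp_add]
    simp
  rw [h3]; simp

lemma poi_le' {θ : ℝ} (hθ0 : 0 ≤ θ) (hθA : θ ≤ A) (x : ℕ) :
    poiPMF θ x ≤ A ^ x / (Nat.factorial x : ℝ) := by
  unfold poiPMF
  have h1 : Real.exp (-θ) * θ ^ x ≤ A ^ x :=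
    calc Real.exp (-θ) * θ ^ x ≤ 1 * θ ^ x :=
          mul_le_mul_of_nonneg_right (Real.exp_le_one_iff.mpr (by linarith)) (by positivity)
      _ = θ ^ x := one_mul _
      _ ≤ A ^ x := pow_le_pow_left₀ hθ0 hθA x
  have hfac : (0:ℝ) < (Nat.factorial x : ℝ) := by exact_mod_cast x.factorial_pos
  exact (div_le_div_iff_of_pos_right hfac).mpr h1

lemma integrable_cm (g : C(I A, ℝ)) (μ : Measure (I A)) [IsFiniteMeasure μ] :
    Integrable g μ := by exact (mkOfCompact g).integrable μ

lemma mix_nonneg (G : Prior A) (x : ℕ) : 0 ≤ mix G x :=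
  integral_nonneg fun θ => poi_nonneg θ.2.1 x

lemma mix_le (G : Prior A) (x : ℕ) : mix G x ≤ A ^ x / (Nat.factorial x : ℝ) := by
  have h := integral_mono (μ := (G : Measure (I A))) (integrable_cm (poiCM A x) _)
    (integrable_const _) (fun θ => poi_le' θ.2.1 θ.2.2 x)
  simpa [measure_univ, mix, poiCM] using h

lemma ofReal_mix (G : Prior A) (x : ℕ) :
    ENNReal.ofReal (mix G x)
      = ∫⁻ θ : I A, ENNReal.ofReal (poiPMF (θ : ℝ) x) ∂(G : Measure (I A)) :=
  ofReal_integral_eq_lintegral_ofReal (integrable_cm (poiCM A x) _)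
    (Filter.Eventually.of_forall fun θ => poi_nonneg θ.2.1 x)

lemma sum_mix (G : Prior A) : ∑' x : ℕ, ENNReal.ofReal (mix G x) = 1 := by
  rw [tsum_congr (ofReal_mix G)]
  rw [← lintegral_tsum (fun x => ((poi_cont x).measurable.ennreal_ofReal).aemeasurable)]
  have h : ∀ θ : I A, ∑' x : ℕ, ENNReal.ofReal (poiPMF (θ : ℝ) x) = 1 :=
    fun θ => poi_tsum θ.2.1
  simp only [h]
  simp [measure_univ]

lemma ofReal_mix_le_one (G : Prior A) (x : ℕ) : ENNReal.ofReal (mix G x) ≤ 1 := by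
  rw [← sum_mix G]
  exact ENNReal.le_tsum x

lemma mix_zero_pos (G : Prior A) : Real.exp (-A) ≤ mix G 0 := by
  have h := integral_mono (μ := (G : Measure (I A))) (integrable_const (Real.exp (-A)))
    (integrable_cm (poiCM A 0) _) (fun θ => by
      show Real.exp (-A) ≤ poiPMF (θ : ℝ) 0
      unfold poiPMF
      simp only [pow_zero, mul_one, Nat.factorial_zero, Nat.cast_one, div_one]
      exact Real.exp_le_exp.mpr (by linarith [θ.2.2]))
  simpa [measure_univ, mix, poiCM] using h

lemma mix_succ_zero (G : Prior A) (x : ℕ) (h : mix G x = 0) : mix G (x + 1) = 0 := by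
  have hae : (fun θ : I A => poiPMF (θ : ℝ) x) =ᵐ[(G : Measure (I A))] 0 :=
    (integral_eq_zero_iff_of_nonneg (fun θ => poi_nonneg θ.2.1 x)
      (integrable_cm (poiCM A x) _)).mp h
  have h2 : (fun θ : I A => poiPMF (θ : ℝ) (x + 1)) =ᵐ[(G : Measure (I A))] 0 := by
    filter_upwards [hae] with θ hθ
    simp only [Pi.zero_apply] at hθ ⊢
    have hfac : poiPMF (θ : ℝ) (x + 1) = poiPMF (θ : ℝ) x * ((θ : ℝ) / ((x : ℝ) + 1)) := by
      unfold poiPMF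
      rw [Nat.factorial_succ]
      push_cast
      field_simp
      ring
    rw [hfac, hθ, zero_mul]
  exact integral_eq_zero_of_ae h2

lemma bayes_nonneg (G : Prior A) (x : ℕ) : 0 ≤ bayes G x :=
  div_nonneg (mul_nonneg (by positivity) (mix_nonneg G _)) (mix_nonneg G x)

lemma succ_mix_le (G : Prior A) (x : ℕ) :
    ((x : ℝ) + 1) * mix G (x + 1) ≤ A * mix G x := by
  have hcm : Continuous fun θ : I A => (θ : ℝ) * poiPMF (θ : ℝ) x :=
    continuous_subtype_val.mul (poi_cont x)
  have h1 : ((x : ℝ) + 1) * mix G (x + 1)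
      = ∫ θ : I A, (θ : ℝ) * poiPMF (θ : ℝ) x ∂(G : Measure (I A)) := by
    rw [mix, ← integral_const_mul]
    apply integral_congr_ae
    filter_upwards with θ
    unfold poiPMF
    rw [Nat.factorial_succ]
    push_cast
    field_simp
    ring
  have h2 : (∫ θ : I A, (θ : ℝ) * poiPMF (θ : ℝ) x ∂(G : Measure (I A)))
      ≤ ∫ θ : I A, A * poiPMF (θ : ℝ) x ∂(G : Measure (I A)) := by
    apply integral_mono (integrable_cm ⟨_, hcm⟩ _) ((integrable_cm (poiCM A x) _).const_mul A)
    intro θ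
    exact mul_le_mul_of_nonneg_right θ.2.2 (poi_nonneg θ.2.1 x)
  rw [h1]
  refine h2.trans (le_of_eq ?_)
  rw [integral_const_mul]
  rfl

lemma bayes_le (hA : 0 ≤ A) (G : Prior A) (x : ℕ) : bayes G x ≤ A := by
  rcases eq_or_lt_of_le (mix_nonneg G x) with h | h
  · rw [bayes, ← h, div_zero]
    exact hA
  · rw [bayes, div_le_iff₀ h]
    exact succ_mix_le G x

lemma bayes_mul (G : Prior A) (x : ℕ) :
    bayes G x * mix G x = ((x : ℝ) + 1) * mix G (x + 1) := by
  rcases eq_or_ne (mix G x) 0 with h | h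
  · rw [h, mul_zero, mix_succ_zero G x h, mul_zero]
  · rw [bayes, div_mul_cancel₀ _ h]

lemma continuous_integral_cm (g : C(I A, ℝ)) :
    Continuous fun G : Prior A => ∫ θ, g θ ∂(G : Measure (I A)) := by
  rw [continuous_iff_continuousAt]
  intro G
  have h := ProbabilityMeasure.tendsto_iff_forall_integral_tendsto.mp
    (tendsto_id : Tendsto id (𝓝 G) (𝓝 G)) (mkOfCompact g)
  simpa [ContinuousAt] using h

lemma mix_continuous (x : ℕ) : Continuous fun G : Prior A => mix G x :=
  continuous_integral_cm (poiCM A x)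

lemma mix_measurable (x : ℕ) : Measurable fun G : Prior A => mix G x :=
  (mix_continuous x).measurable

lemma bayes_measurable (x : ℕ) : Measurable fun G : Prior A => bayes G x :=
  (measurable_const.mul (mix_measurable (x + 1))).div (mix_measurable x)

lemma tsum_prod_pow (g : ℕ → ℝ≥0∞) (n : ℕ) :
    ∑' x : Fin n → ℕ, ∏ j, g (x j) = (∑' m, g m) ^ n := by
  induction n with
  | zero =>
      rw [pow_zero]
      have : ∀ x : Fin 0 → ℕ, (∏ j, g (x j)) = 1 := by intro x; simp
      rw [tsum_congr this, tsum_eq_single (default : Fin 0 → ℕ)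
        (fun b hb => absurd (Subsingleton.elim b default) hb)]
  | succ n ih =>
      rw [← (Fin.consEquiv (fun _ : Fin (n+1) => ℕ)).tsum_eq fun x => ∏ j, g (x j)]
      have h1 : ∀ p : ℕ × (Fin n → ℕ),
          (∏ j, g ((Fin.consEquiv (fun _ : Fin (n+1) => ℕ)) p j))
            = g p.1 * ∏ j, g (p.2 j) := by
        intro p
        have he : ((Fin.consEquiv (fun _ : Fin (n+1) => ℕ)) p : Fin (n+1) → ℕ)
            = Fin.cons p.1 p.2 := rfl
        rw [he, Fin.prod_univ_succ]
        simp [Fin.cons_zero, Fin.cons_succ]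
      rw [tsum_congr h1, ENNReal.tsum_prod' ]
      have h2 : ∀ m : ℕ, ∑' y : Fin n → ℕ, g m * ∏ j, g (y j)
          = g m * (∑' q, g q) ^ n := by
        intro m
        rw [ENNReal.tsum_mul_left, ih]
      rw [tsum_congr h2, ENNReal.tsum_mul_right, pow_succ]
      ring

lemma tsum_prod_mix (G : Prior A) (n : ℕ) :
    ∑' x : Fin n → ℕ, (∏ j, ENNReal.ofReal (mix G (x j))) = 1 := by
  rw [tsum_prod_pow (fun m => ENNReal.ofReal (mix G m)) n, sum_mix, one_pow]

end PoiSetup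

namespace Reg

open PoiSetup MeasureTheory Filter Topology
open scoped ENNReal NNReal

open PoiSetup MeasureTheory Filter Topology
open scoped ENNReal NNReal

variable {A : ℝ} {n : ℕ}

/-- real weight -/
def wR (G : Prior A) (x : Fin n → ℕ) : ℝ := ∏ j, mix G (x j)

lemma wR_nonneg (G : Prior A) (x : Fin n → ℕ) : 0 ≤ wR G x :=
  Finset.prod_nonneg fun j _ => mix_nonneg G (x j)

lemma wR_le_one (G : Prior A) (x : Fin n → ℕ) : wR G x ≤ 1 := by
  apply Finset.prod_le_one
  · intro j _; exact mix_nonneg G (x j)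
  · intro j _
    exact ENNReal.ofReal_le_one.mp (ofReal_mix_le_one G (x j))

lemma ofReal_wR (G : Prior A) (x : Fin n → ℕ) :
    ENNReal.ofReal (wR G x) = ∏ j, ENNReal.ofReal (mix G (x j)) := by
  rw [wR, ← ENNReal.ofReal_prod_of_nonneg]
  intro j _; exact mix_nonneg G (x j)

lemma wR_measurable (x : Fin n → ℕ) : Measurable fun G : Prior A => wR G x := by
  apply Finset.measurable_prod
  intro j _; exact mix_measurable (x j)

/-- per-`x` real regret summand -/
def ρ (est : (Fin n → ℕ) → Fin n → ℝ) (x : Fin n → ℕ) (G : Prior A) : ℝ :=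
  wR G x * ((n : ℝ)⁻¹ * ∑ i, (est x i - bayes G (x i)) ^ 2)

lemma ρ_nonneg (est) (x : Fin n → ℕ) (G : Prior A) : 0 ≤ ρ est x G := by
  apply mul_nonneg (wR_nonneg G x)
  apply mul_nonneg (by positivity)
  apply Finset.sum_nonneg
  intro i _; positivity

lemma ρ_measurable (est) (x : Fin n → ℕ) : Measurable fun G : Prior A => ρ est x G := by
  apply (wR_measurable x).mul
  apply Measurable.const_mul
  apply Finset.measurable_sum
  intro i _
  exact ((measurable_const.sub (bayes_measurable (x i))).pow measurable_const)

lemma ρ_le (hA : 0 ≤ A) (est) (x : Fin n → ℕ) (G : Prior A) :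
    ρ est x G ≤ (n : ℝ)⁻¹ * ∑ i, (|est x i| + A) ^ 2 := by
  have h1 : (n : ℝ)⁻¹ * ∑ i, (est x i - bayes G (x i)) ^ 2
      ≤ (n : ℝ)⁻¹ * ∑ i, (|est x i| + A) ^ 2 := by
    apply mul_le_mul_of_nonneg_left ?_ (by positivity)
    apply Finset.sum_le_sum
    intro i _
    have hb0 := bayes_nonneg G (x i)
    have hbA := bayes_le hA G (x i)
    have : |est x i - bayes G (x i)| ≤ |est x i| + A := by
      calc |est x i - bayes G (x i)| ≤ |est x i| + |bayes G (x i)| := abs_sub _ _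
        _ ≤ |est x i| + A := by rw [abs_of_nonneg hb0]; linarith
    calc (est x i - bayes G (x i)) ^ 2 = |est x i - bayes G (x i)| ^ 2 := (sq_abs _).symm
      _ ≤ (|est x i| + A) ^ 2 := by
          apply pow_le_pow_left₀ (abs_nonneg _) this
  calc ρ est x G ≤ 1 * ((n : ℝ)⁻¹ * ∑ i, (est x i - bayes G (x i)) ^ 2) := by
        apply mul_le_mul_of_nonneg_right (wR_le_one G x)
        apply mul_nonneg (by positivity)
        exact Finset.sum_nonneg fun i _ => by positivity
    _ = (n : ℝ)⁻¹ * ∑ i, (est x i - bayes G (x i)) ^ 2 := one_mul _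
    _ ≤ (n : ℝ)⁻¹ * ∑ i, (|est x i| + A) ^ 2 := h1

lemma ρ_integrable (hA : 0 ≤ A) (est) (x : Fin n → ℕ) (Q : Measure (Prior A))
    [IsProbabilityMeasure Q] : Integrable (fun G => ρ est x G) Q := by
  refine ⟨(ρ_measurable est x).aestronglyMeasurable, ?_⟩
  apply HasFiniteIntegral.of_bounded (C := (n : ℝ)⁻¹ * ∑ i, (|est x i| + A) ^ 2)
  filter_upwards with G
  rw [Real.norm_eq_abs, abs_of_nonneg (ρ_nonneg est x G)]
  exact ρ_le hA est x G

lemma regretE_eq (est) (G : Prior A) :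
    regretE (n := n) est G = ∑' x : Fin n → ℕ, ENNReal.ofReal (ρ est x G) := by
  apply tsum_congr
  intro x
  rw [ρ, ENNReal.ofReal_mul (wR_nonneg G x), ofReal_wR]

lemma regretE_measurable (est) :
    Measurable fun G : Prior A => regretE (n := n) est G := by
  have : ∀ G : Prior A, regretE (n := n) est G = ∑' x, ENNReal.ofReal (ρ est x G) :=
    regretE_eq est
  rw [funext this]
  exact Measurable.ennreal_tsum fun x => (ρ_measurable est x).ennreal_ofReal

/-- the regret is bounded by `A ^ 2` whenever the estimator is `[0, A]`-valued -/
lemma regretE_le_sq (hA : 0 ≤ A) (est : (Fin n → ℕ) → Fin n → ℝ)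
    (hest : ∀ x i, 0 ≤ est x i ∧ est x i ≤ A) (G : Prior A) :
    regretE (n := n) est G ≤ ENNReal.ofReal (A ^ 2) := by
  rw [regretE_eq]
  have h1 : ∀ x : Fin n → ℕ, ENNReal.ofReal (ρ est x G)
      ≤ ENNReal.ofReal (wR G x) * ENNReal.ofReal (A ^ 2) := by
    intro x
    rw [← ENNReal.ofReal_mul (wR_nonneg G x)]
    apply ENNReal.ofReal_le_ofReal
    rw [ρ]
    apply mul_le_mul_of_nonneg_left ?_ (wR_nonneg G x)
    have hsum : ∑ i, (est x i - bayes G (x i)) ^ 2 ≤ ∑ _i : Fin n, A ^ 2 := by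
      apply Finset.sum_le_sum
      intro i _
      have hb0 := bayes_nonneg G (x i)
      have hbA := bayes_le hA G (x i)
      have he := hest x i
      rw [sq_abs (est x i - bayes G (x i)) |>.symm]
      apply pow_le_pow_left₀ (abs_nonneg _)
      rw [abs_le]
      constructor <;> linarith
    calc (n : ℝ)⁻¹ * ∑ i, (est x i - bayes G (x i)) ^ 2
        ≤ (n : ℝ)⁻¹ * ∑ _i : Fin n, A ^ 2 := by
          apply mul_le_mul_of_nonneg_left hsum (by positivity)
      _ ≤ A ^ 2 := by
          rcases Nat.eq_zero_or_pos n with hn | hn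
          · subst hn; simp; positivity
          · rw [Finset.sum_const, Finset.card_univ, Fintype.card_fin]
            rw [nsmul_eq_mul, ← mul_assoc, inv_mul_cancel₀ (by exact_mod_cast hn.ne'), one_mul]
  calc ∑' x : Fin n → ℕ, ENNReal.ofReal (ρ est x G)
      ≤ ∑' x : Fin n → ℕ, ENNReal.ofReal (wR G x) * ENNReal.ofReal (A ^ 2) :=
        ENNReal.tsum_le_tsum h1
    _ = (∑' x : Fin n → ℕ, ENNReal.ofReal (wR G x)) * ENNReal.ofReal (A ^ 2) :=
        ENNReal.tsum_mul_right
    _ = ENNReal.ofReal (A ^ 2) := by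
        have : ∑' x : Fin n → ℕ, ENNReal.ofReal (wR G x) = 1 := by
          rw [tsum_congr (fun x => ofReal_wR (G := G) (x := x))]
          exact tsum_prod_mix G n
        rw [this, one_mul]

end Reg

namespace Reg

open PoiSetup MeasureTheory Filter Topology
open scoped ENNReal NNReal

variable {A : ℝ} {n : ℕ}

lemma integrable_of_bdd {Q : Measure (Prior A)} [IsProbabilityMeasure Q]
    {f : Prior A → ℝ} (hm : Measurable f) {C : ℝ} (hC : ∀ G, |f G| ≤ C) :
    Integrable f Q :=
  ⟨hm.aestronglyMeasurable, HasFiniteIntegral.of_bounded (C := C)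
    (Filter.Eventually.of_forall fun G => by rw [Real.norm_eq_abs]; exact hC G)⟩

section Quad

variable (Q : Measure (Prior A)) [IsProbabilityMeasure Q]

lemma int_w (x : Fin n → ℕ) : Integrable (fun G : Prior A => wR G x) Q :=
  integrable_of_bdd (wR_measurable x) (C := 1)
    (fun G => by rw [abs_of_nonneg (wR_nonneg G x)]; exact wR_le_one G x)

lemma int_wb (hA : 0 ≤ A) (x : Fin n → ℕ) (i : Fin n) :
    Integrable (fun G : Prior A => wR G x * bayes G (x i)) Q := by
  apply integrable_of_bdd ((wR_measurable x).mul (bayes_measurable (x i))) (C := A)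
  intro G
  show |wR G x * bayes G (x i)| ≤ A
  rw [abs_of_nonneg (mul_nonneg (wR_nonneg G x) (bayes_nonneg G (x i)))]
  calc wR G x * bayes G (x i) ≤ 1 * bayes G (x i) :=
        mul_le_mul_of_nonneg_right (wR_le_one G x) (bayes_nonneg G (x i))
    _ = bayes G (x i) := one_mul _
    _ ≤ A := bayes_le hA G (x i)

lemma int_wsq (hA : 0 ≤ A) (x : Fin n → ℕ) (i : Fin n) (c : ℝ) :
    Integrable (fun G : Prior A => wR G x * (c - bayes G (x i)) ^ 2) Q := by
  apply integrable_of_bdd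
    ((wR_measurable x).mul
      ((measurable_const.sub (bayes_measurable (x i))).pow measurable_const))
    (C := (|c| + A) ^ 2)
  intro G
  have hb0 := bayes_nonneg G (x i)
  have hbA := bayes_le hA G (x i)
  have h1 : (c - bayes G (x i)) ^ 2 ≤ (|c| + A) ^ 2 := by
    rw [(sq_abs (c - bayes G (x i))).symm]
    apply pow_le_pow_left₀ (abs_nonneg _)
    calc |c - bayes G (x i)| ≤ |c| + |bayes G (x i)| := abs_sub _ _
      _ ≤ |c| + A := by rw [abs_of_nonneg hb0]; linarith
  show |wR G x * (c - bayes G (x i)) ^ 2| ≤ (|c| + A) ^ 2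
  rw [abs_of_nonneg (mul_nonneg (wR_nonneg G x) (by positivity))]
  calc wR G x * (c - bayes G (x i)) ^ 2 ≤ 1 * (c - bayes G (x i)) ^ 2 :=
        mul_le_mul_of_nonneg_right (wR_le_one G x) (by positivity)
    _ = (c - bayes G (x i)) ^ 2 := one_mul _
    _ ≤ (|c| + A) ^ 2 := h1

lemma int_wb2 (hA : 0 ≤ A) (x : Fin n → ℕ) (i : Fin n) :
    Integrable (fun G : Prior A => wR G x * bayes G (x i) ^ 2) Q := by
  apply integrable_of_bdd
    ((wR_measurable x).mul ((bayes_measurable (x i)).pow measurable_const))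
    (C := A ^ 2)
  intro G
  have hb0 := bayes_nonneg G (x i)
  have hbA := bayes_le hA G (x i)
  show |wR G x * bayes G (x i) ^ 2| ≤ A ^ 2
  rw [abs_of_nonneg (mul_nonneg (wR_nonneg G x) (by positivity))]
  calc wR G x * bayes G (x i) ^ 2 ≤ 1 * bayes G (x i) ^ 2 :=
        mul_le_mul_of_nonneg_right (wR_le_one G x) (by positivity)
    _ = bayes G (x i) ^ 2 := one_mul _
    _ ≤ A ^ 2 := by apply pow_le_pow_left₀ hb0 hbA

lemma hbayes_eq (x : Fin n → ℕ) (i : Fin n) :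
    hbayes Q x i
      = (∫ G, wR G x * bayes G (x i) ∂Q) / (∫ G, wR G x ∂Q) := by
  rw [hbayes]
  congr 1
  apply integral_congr_ae
  filter_upwards with G
  rw [mul_comm]
  rfl

lemma expand_quad (hA : 0 ≤ A) (x : Fin n → ℕ) (i : Fin n) (c : ℝ) :
    ∫ G, wR G x * (c - bayes G (x i)) ^ 2 ∂Q
      = c ^ 2 * (∫ G, wR G x ∂Q) - 2 * c * (∫ G, wR G x * bayes G (x i) ∂Q)
        + ∫ G, wR G x * bayes G (x i) ^ 2 ∂Q := by
  have h : (fun G : Prior A => wR G x * (c - bayes G (x i)) ^ 2)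
      = fun G => (c ^ 2 * wR G x - 2 * c * (wR G x * bayes G (x i)))
        + wR G x * bayes G (x i) ^ 2 := by
    funext G; ring
  have h1 : Integrable
      (fun G : Prior A => c ^ 2 * wR G x - 2 * c * (wR G x * bayes G (x i))) Q := by
    exact ((int_w Q x).const_mul (c ^ 2)).sub ((int_wb Q hA x i).const_mul (2 * c))
  rw [h, integral_add h1 (int_wb2 Q hA x i),
    integral_sub ((int_w Q x).const_mul (c ^ 2)) ((int_wb Q hA x i).const_mul (2 * c)),
    integral_const_mul, integral_const_mul]

lemma quad_min (hA : 0 ≤ A) (x : Fin n → ℕ) (i : Fin n) (e : ℝ) :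
    ∫ G, wR G x * (hbayes Q x i - bayes G (x i)) ^ 2 ∂Q
      ≤ ∫ G, wR G x * (e - bayes G (x i)) ^ 2 ∂Q := by
  set W := ∫ G, wR G x ∂Q with hW
  set Y := ∫ G, wR G x * bayes G (x i) ∂Q with hY
  have hW0 : 0 ≤ W := integral_nonneg fun G => wR_nonneg G x
  have hY0 : 0 ≤ Y := integral_nonneg fun G =>
    mul_nonneg (wR_nonneg G x) (bayes_nonneg G (x i))
  have hYW : Y ≤ A * W := by
    rw [hY, hW, ← integral_const_mul]
    apply integral_mono (int_wb Q hA x i) ((int_w Q x).const_mul A)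
    intro G
    show wR G x * bayes G (x i) ≤ A * wR G x
    rw [mul_comm A (wR G x)]
    exact mul_le_mul_of_nonneg_left (bayes_le hA G (x i)) (wR_nonneg G x)
  rw [expand_quad Q hA x i, expand_quad Q hA x i, hbayes_eq Q x i, ← hW, ← hY]
  rcases eq_or_lt_of_le hW0 with h0 | hpos
  · have hY' : Y = 0 := le_antisymm (by rw [← h0] at hYW; linarith) hY0
    rw [← h0, hY']
    ring_nf
    exact le_rfl
  · have key : (Y / W) ^ 2 * W - 2 * (Y / W) * Y ≤ e ^ 2 * W - 2 * e * Y := by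
      have h2 : (Y / W) ^ 2 * W - 2 * (Y / W) * Y = -(Y ^ 2) / W := by
        field_simp
        ring
      rw [h2, div_le_iff₀ hpos]
      nlinarith [sq_nonneg (e * W - Y)]
    linarith

end Quad

section Opt

variable (Q : Measure (Prior A)) [IsProbabilityMeasure Q]

lemma lint_regret_eq (hA : 0 ≤ A) (est : (Fin n → ℕ) → Fin n → ℝ) :
    ∫⁻ G, regretE (n := n) est G ∂Q
      = ∑' x : Fin n → ℕ, ENNReal.ofReal (∫ G, ρ est x G ∂Q) := by
  rw [lintegral_congr (fun G => regretE_eq (n := n) est G),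
    lintegral_tsum (fun x => ((ρ_measurable est x).ennreal_ofReal).aemeasurable)]
  apply tsum_congr
  intro x
  exact (ofReal_integral_eq_lintegral_ofReal (ρ_integrable hA est x Q)
    (Filter.Eventually.of_forall fun G => ρ_nonneg est x G)).symm

lemma rho_decomp (hA : 0 ≤ A) (est : (Fin n → ℕ) → Fin n → ℝ) (x : Fin n → ℕ) :
    ∫ G, ρ est x G ∂Q
      = (n : ℝ)⁻¹ * ∑ i, ∫ G, wR G x * (est x i - bayes G (x i)) ^ 2 ∂Q := by
  have h : (fun G : Prior A => ρ est x G)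
      = fun G => (n : ℝ)⁻¹ * ∑ i, wR G x * (est x i - bayes G (x i)) ^ 2 := by
    funext G
    rw [ρ, mul_left_comm, Finset.mul_sum]
  rw [h, integral_const_mul, integral_finset_sum _ (fun i _ => int_wsq Q hA x i (est x i))]

theorem bayes_opt (hA : 0 ≤ A) (est : (Fin n → ℕ) → Fin n → ℝ) :
    ∫⁻ G, regretE (n := n) (fun x i => hbayes Q x i) G ∂Q
      ≤ ∫⁻ G, regretE (n := n) est G ∂Q := by
  rw [lint_regret_eq Q hA, lint_regret_eq Q hA]
  apply ENNReal.tsum_le_tsum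
  intro x
  apply ENNReal.ofReal_le_ofReal
  rw [rho_decomp Q hA, rho_decomp Q hA]
  apply mul_le_mul_of_nonneg_left ?_ (by positivity)
  apply Finset.sum_le_sum
  intro i _
  exact quad_min Q hA x i (est x i)

lemma hbayes_nonneg' (Q' : Measure (Prior A)) (x : Fin n → ℕ) (i : Fin n) :
    0 ≤ hbayes Q' x i :=
  div_nonneg
    (integral_nonneg fun G => mul_nonneg (bayes_nonneg G (x i))
      (Finset.prod_nonneg fun j _ => mix_nonneg G (x j)))
    (integral_nonneg fun G => Finset.prod_nonneg fun j _ => mix_nonneg G (x j))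

theorem bayes_opt_inf (hA : 0 ≤ A) :
    ∫⁻ G, regretE (n := n) (fun x i => hbayes Q x i) G ∂Q
      = ⨅ est : Est n, ∫⁻ G, regretE est.1 G ∂Q := by
  apply le_antisymm
  · exact le_iInf fun est => bayes_opt Q hA est.1
  · exact iInf_le (fun est : Est n => ∫⁻ G, regretE est.1 G ∂Q)
      ⟨fun x i => hbayes Q x i, fun x i => hbayes_nonneg' Q x i⟩

end Opt

end Reg

namespace Compat

open MeasureTheory Filter Topology TopologicalSpace
open scoped ENNReal NNReal

variable {A : ℝ}

lemma seqcpt_prior (A : ℝ) : IsSeqCompact (Set.univ : Set (Prior A)) := by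
  intro μs _
  obtain ⟨ν, φ, hφ, h⟩ := SeqCpt.exists_tendsto_subseq μs
  exact ⟨ν, trivial, φ, hφ, h⟩

instance (A : ℝ) : CompactSpace (Prior A) := by
  letI := TopologicalSpace.metrizableSpaceMetric (Prior A)
  constructor
  exact (seqcpt_prior A).isCompact

/-- sequential compactness of the space of priors-on-priors -/
lemma seqcpt_hyper (A : ℝ) (Qs : ℕ → ProbabilityMeasure (Prior A)) :
    ∃ (Q : ProbabilityMeasure (Prior A)) (φ : ℕ → ℕ), StrictMono φ ∧
      Tendsto (fun j => Qs (φ j)) atTop (𝓝 Q) := by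
  letI := TopologicalSpace.metrizableSpaceMetric (Prior A)
  exact SeqCpt.exists_tendsto_subseq Qs

end Compat

namespace Reg

open PoiSetup MeasureTheory Filter Topology
open scoped ENNReal NNReal

variable {A : ℝ} {n : ℕ}

lemma mix_le_one (G : Prior A) (m : ℕ) : mix G m ≤ 1 :=
  ENNReal.ofReal_le_one.mp (ofReal_mix_le_one G m)

lemma avg_sq_le (hA : 0 ≤ A) {est : (Fin n → ℕ) → Fin n → ℝ}
    (hest : ∀ x i, 0 ≤ est x i ∧ est x i ≤ A) (x : Fin n → ℕ) (G : Prior A) :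
    (n : ℝ)⁻¹ * ∑ i, (est x i - bayes G (x i)) ^ 2 ≤ A ^ 2 := by
  have hsum : ∑ i, (est x i - bayes G (x i)) ^ 2 ≤ ∑ _i : Fin n, A ^ 2 := by
    apply Finset.sum_le_sum
    intro i _
    have hb0 := bayes_nonneg G (x i)
    have hbA := bayes_le hA G (x i)
    have he := hest x i
    rw [(sq_abs (est x i - bayes G (x i))).symm]
    apply pow_le_pow_left₀ (abs_nonneg _)
    rw [abs_le]
    constructor <;> linarith
  calc (n : ℝ)⁻¹ * ∑ i, (est x i - bayes G (x i)) ^ 2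
      ≤ (n : ℝ)⁻¹ * ∑ _i : Fin n, A ^ 2 := by
        apply mul_le_mul_of_nonneg_left hsum (by positivity)
    _ ≤ A ^ 2 := by
        rcases Nat.eq_zero_or_pos n with hn | hn
        · subst hn; simp; positivity
        · rw [Finset.sum_const, Finset.card_univ, Fintype.card_fin]
          rw [nsmul_eq_mul, ← mul_assoc, inv_mul_cancel₀ (by exact_mod_cast hn.ne'), one_mul]

lemma ρ_le_w (hA : 0 ≤ A) {est : (Fin n → ℕ) → Fin n → ℝ}
    (hest : ∀ x i, 0 ≤ est x i ∧ est x i ≤ A) (x : Fin n → ℕ) (G : Prior A) :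
    ρ est x G ≤ wR G x * A ^ 2 :=
  mul_le_mul_of_nonneg_left (avg_sq_le hA hest x G) (wR_nonneg G x)

def cR (A : ℝ) (m : ℕ) : ℝ := min (A ^ m / (Nat.factorial m : ℝ)) 1

lemma cR_nonneg (hA : 0 ≤ A) (m : ℕ) : 0 ≤ cR A m :=
  le_min (by positivity) zero_le_one

lemma mix_le_cR (G : Prior A) (m : ℕ) : mix G m ≤ cR A m :=
  le_min (mix_le G m) (mix_le_one G m)

lemma wR_le_cprod (hA : 0 ≤ A) (G : Prior A) (x : Fin n → ℕ) :
    wR G x ≤ ∏ j, cR A (x j) :=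
  Finset.prod_le_prod (fun j _ => mix_nonneg G (x j)) (fun j _ => mix_le_cR G (x j))

lemma summable_cprod (hA : 0 ≤ A) (n : ℕ) :
    Summable (fun x : Fin n → ℕ => ∏ j, cR A (x j)) := by
  have h1 : ∑' x : Fin n → ℕ, ∏ j, ENNReal.ofReal (cR A (x j))
      = (∑' m, ENNReal.ofReal (cR A m)) ^ n :=
    tsum_prod_pow (fun m => ENNReal.ofReal (cR A m)) n
  have h2 : (∑' m, ENNReal.ofReal (cR A m)) ≠ ⊤ := by
    have : (∑' m, ENNReal.ofReal (cR A m))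
        ≤ ∑' m, ENNReal.ofReal (A ^ m / (Nat.factorial m : ℝ)) :=
      ENNReal.tsum_le_tsum (fun m => ENNReal.ofReal_le_ofReal (min_le_left _ _))
    have h3 : ∑' m, ENNReal.ofReal (A ^ m / (Nat.factorial m : ℝ))
        = ENNReal.ofReal (∑' m, A ^ m / (Nat.factorial m : ℝ)) :=
      (ENNReal.ofReal_tsum_of_nonneg (fun m => by positivity)
        (Real.summable_pow_div_factorial A)).symm
    rw [h3] at this
    exact (this.trans_lt ENNReal.ofReal_lt_top).ne
  have h3 : ∑' x : Fin n → ℕ, ∏ j, ENNReal.ofReal (cR A (x j)) ≠ ⊤ := by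
    rw [h1]
    exact ENNReal.pow_ne_top h2
  have h4 := ENNReal.summable_toReal h3
  apply Summable.congr h4
  intro x
  rw [ENNReal.toReal_prod]
  exact Finset.prod_congr rfl (fun j _ => ENNReal.toReal_ofReal (cR_nonneg hA (x j)))

lemma wR_continuous (x : Fin n → ℕ) : Continuous fun G : Prior A => wR G x :=
  continuous_finset_prod _ fun j _ => mix_continuous (x j)

lemma bayes_continuousAt {G₀ : Prior A} (m : ℕ) (h : mix G₀ m ≠ 0) :
    ContinuousAt (fun G : Prior A => bayes G m) G₀ :=
  ContinuousAt.div ((continuous_const.mul (mix_continuous (m + 1))).continuousAt)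
    ((mix_continuous m).continuousAt) h

lemma ρ_continuous (hA : 0 ≤ A) {est : (Fin n → ℕ) → Fin n → ℝ}
    (hest : ∀ x i, 0 ≤ est x i ∧ est x i ≤ A) (x : Fin n → ℕ) :
    Continuous fun G : Prior A => ρ est x G := by
  rw [continuous_iff_continuousAt]
  intro G₀
  by_cases hall : ∀ i : Fin n, mix G₀ (x i) ≠ 0
  · apply ContinuousAt.mul (wR_continuous x).continuousAt
    apply ContinuousAt.mul continuousAt_const
    apply tendsto_finset_sum
    intro i _
    exact (continuousAt_const.sub (bayes_continuousAt (x i) (hall i))).pow 2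
  · push_neg at hall
    obtain ⟨i₀, hi₀⟩ := hall
    have hw0 : wR G₀ x = 0 := Finset.prod_eq_zero (Finset.mem_univ i₀) hi₀
    have hval : ρ est x G₀ = 0 := by rw [ρ, hw0, zero_mul]
    rw [ContinuousAt, hval]
    apply squeeze_zero' (Filter.Eventually.of_forall fun G => ρ_nonneg est x G)
      (Filter.Eventually.of_forall fun G => ρ_le_w hA hest x G)
    have ht : Tendsto (fun G : Prior A => wR G x * A ^ 2) (𝓝 G₀) (𝓝 (wR G₀ x * A ^ 2)) :=
      ((wR_continuous x).mul continuous_const).tendsto G₀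
    rwa [hw0, zero_mul] at ht

def rreg (est : (Fin n → ℕ) → Fin n → ℝ) (G : Prior A) : ℝ :=
  ∑' x : Fin n → ℕ, ρ est x G

lemma summable_ρ (hA : 0 ≤ A) {est : (Fin n → ℕ) → Fin n → ℝ}
    (hest : ∀ x i, 0 ≤ est x i ∧ est x i ≤ A) (G : Prior A) :
    Summable (fun x : Fin n → ℕ => ρ est x G) := by
  apply Summable.of_nonneg_of_le (fun x => ρ_nonneg est x G) (fun x => ?_)
    ((summable_cprod hA n).mul_left (A ^ 2))
  calc ρ est x G ≤ wR G x * A ^ 2 := ρ_le_w hA hest x G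
    _ ≤ (∏ j, cR A (x j)) * A ^ 2 :=
        mul_le_mul_of_nonneg_right (wR_le_cprod hA G x) (by positivity)
    _ = A ^ 2 * ∏ j, cR A (x j) := mul_comm _ _

lemma rreg_continuous (hA : 0 ≤ A) {est : (Fin n → ℕ) → Fin n → ℝ}
    (hest : ∀ x i, 0 ≤ est x i ∧ est x i ≤ A) :
    Continuous (rreg (A := A) (n := n) est) := by
  apply continuous_tsum (fun x => ρ_continuous hA hest x)
    ((summable_cprod hA n).mul_left (A ^ 2))
  intro x G
  rw [Real.norm_eq_abs, abs_of_nonneg (ρ_nonneg est x G)]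
  calc ρ est x G ≤ wR G x * A ^ 2 := ρ_le_w hA hest x G
    _ ≤ (∏ j, cR A (x j)) * A ^ 2 :=
        mul_le_mul_of_nonneg_right (wR_le_cprod hA G x) (by positivity)
    _ = A ^ 2 * ∏ j, cR A (x j) := mul_comm _ _

lemma rreg_nonneg (est : (Fin n → ℕ) → Fin n → ℝ) (G : Prior A) : 0 ≤ rreg est G :=
  tsum_nonneg fun x => ρ_nonneg est x G

lemma rreg_le (hA : 0 ≤ A) {est : (Fin n → ℕ) → Fin n → ℝ}
    (hest : ∀ x i, 0 ≤ est x i ∧ est x i ≤ A) (G : Prior A) :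
    rreg est G ≤ A ^ 2 * ∑' x : Fin n → ℕ, ∏ j, cR A (x j) := by
  rw [rreg, ← tsum_mul_left]
  apply Summable.tsum_le_tsum ?_ (summable_ρ hA hest G) ((summable_cprod hA n).mul_left (A ^ 2))
  intro x
  calc ρ est x G ≤ wR G x * A ^ 2 := ρ_le_w hA hest x G
    _ ≤ (∏ j, cR A (x j)) * A ^ 2 :=
        mul_le_mul_of_nonneg_right (wR_le_cprod hA G x) (by positivity)
    _ = A ^ 2 * ∏ j, cR A (x j) := mul_comm _ _

lemma regret_eq_ofReal_rreg (hA : 0 ≤ A) {est : (Fin n → ℕ) → Fin n → ℝ}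
    (hest : ∀ x i, 0 ≤ est x i ∧ est x i ≤ A) (G : Prior A) :
    regretE (n := n) est G = ENNReal.ofReal (rreg est G) := by
  rw [regretE_eq, rreg,
    ENNReal.ofReal_tsum_of_nonneg (fun x => ρ_nonneg est x G) (summable_ρ hA hest G)]

lemma continuous_integral_bdd {X : Type*} [TopologicalSpace X] [MeasurableSpace X]
    [OpensMeasurableSpace X] (f : X →ᵇ ℝ) :
    Continuous fun Q : ProbabilityMeasure X => ∫ x, f x ∂(Q : Measure X) := by
  rw [continuous_iff_continuousAt]
  intro Q
  exact ProbabilityMeasure.tendsto_iff_forall_integral_tendsto.mp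
    (tendsto_id : Tendsto id (𝓝 Q) (𝓝 Q)) f

lemma continuous_lint_regret (hA : 0 ≤ A) {est : (Fin n → ℕ) → Fin n → ℝ}
    (hest : ∀ x i, 0 ≤ est x i ∧ est x i ≤ A) :
    Continuous fun Q : ProbabilityMeasure (Prior A) =>
      ∫⁻ G, regretE (n := n) est G ∂(Q : Measure (Prior A)) := by
  have hint : ∀ Q : ProbabilityMeasure (Prior A), Integrable (rreg est) (Q : Measure (Prior A)) := by
    intro Q
    apply integrable_of_bdd (rreg_continuous hA hest).measurable
      (C := A ^ 2 * ∑' x : Fin n → ℕ, ∏ j, cR A (x j))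
    intro G
    rw [abs_of_nonneg (rreg_nonneg est G)]
    exact rreg_le hA hest G
  have h1 : ∀ Q : ProbabilityMeasure (Prior A),
      ∫⁻ G, regretE (n := n) est G ∂(Q : Measure (Prior A))
        = ENNReal.ofReal (∫ G, rreg est G ∂(Q : Measure (Prior A))) := by
    intro Q
    rw [lintegral_congr (fun G => regret_eq_ofReal_rreg hA hest G)]
    exact (ofReal_integral_eq_lintegral_ofReal (hint Q)
      (Filter.Eventually.of_forall fun G => rreg_nonneg est G)).symm
  rw [funext h1]
  set F : BoundedContinuousFunction (Prior A) ℝ :=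
    BoundedContinuousFunction.ofNormedAddCommGroup (rreg est) (rreg_continuous hA hest)
      (A ^ 2 * ∑' x : Fin n → ℕ, ∏ j, cR A (x j)) (fun G => by
        rw [Real.norm_eq_abs, abs_of_nonneg (rreg_nonneg est G)]
        exact rreg_le hA hest G) with hF
  have h2 : ∀ Q : ProbabilityMeasure (Prior A),
      (∫ G, rreg est G ∂(Q : Measure (Prior A))) = ∫ G, F G ∂(Q : Measure (Prior A)) := by
    intro Q; rfl
  simp only [h2]
  exact ENNReal.continuous_ofReal.comp (continuous_integral_bdd F)

def clip (A : ℝ) {n : ℕ} (est : (Fin n → ℕ) → Fin n → ℝ) : (Fin n → ℕ) → Fin n → ℝ :=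
  fun x i => min (est x i) A

lemma clip_mem (hA : 0 ≤ A) (est : Est n) (x : Fin n → ℕ) (i : Fin n) :
    0 ≤ clip A est.1 x i ∧ clip A est.1 x i ≤ A :=
  ⟨le_min (est.2 x i) hA, min_le_right _ _⟩

lemma regret_clip_le (hA : 0 ≤ A) (est : Est n) (G : Prior A) :
    regretE (n := n) (clip A est.1) G ≤ regretE (n := n) est.1 G := by
  rw [regretE, regretE]
  apply ENNReal.tsum_le_tsum
  intro x
  apply mul_le_mul_right
  apply ENNReal.ofReal_le_ofReal
  apply mul_le_mul_of_nonneg_left ?_ (by positivity)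
  apply Finset.sum_le_sum
  intro i _
  have hb0 := bayes_nonneg G (x i)
  have hbA := bayes_le hA G (x i)
  have he0 := est.2 x i
  rcases le_total (est.1 x i) A with h | h
  · rw [clip, min_eq_left h]
  · rw [clip, min_eq_right h]
    apply sq_le_sq' <;> linarith

lemma iInf_clip (hA : 0 ≤ A) (Q : Measure (Prior A)) :
    (⨅ est : Est n, ∫⁻ G, regretE est.1 G ∂Q)
      = ⨅ est : Est n, ∫⁻ G, regretE (n := n) (clip A est.1) G ∂Q := by
  apply le_antisymm
  · apply le_iInf; intro est
    exact iInf_le (fun e : Est n => ∫⁻ G, regretE e.1 G ∂Q)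
      ⟨clip A est.1, fun x i => (clip_mem hA est x i).1⟩
  · apply le_iInf; intro est
    exact iInf_le_of_le est (lintegral_mono (fun G => regret_clip_le hA est G))

end Reg

namespace Reg

open PoiSetup MeasureTheory Filter Topology
open scoped ENNReal NNReal

variable {A : ℝ} {n : ℕ}

/-- the Bayes regret of a prior-on-priors -/
def BQ (A : ℝ) (n : ℕ) (Q : ProbabilityMeasure (Prior A)) : ℝ≥0∞ :=
  ⨅ est : Est n, ∫⁻ G, regretE est.1 G ∂(Q : Measure (Prior A))

lemma zero_est_mem : ∀ (x : Fin n → ℕ) (i : Fin n), 0 ≤ (0 : ℝ) := fun _ _ => le_rfl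

lemma BQ_le (hA : 0 ≤ A) (Q : ProbabilityMeasure (Prior A)) :
    BQ A n Q ≤ ENNReal.ofReal (A ^ 2) := by
  have h0 : BQ A n Q ≤ ∫⁻ G, regretE (n := n) (fun _ _ => (0:ℝ)) G ∂(Q : Measure (Prior A)) :=
    iInf_le (fun est : Est n => ∫⁻ G, regretE est.1 G ∂(Q : Measure (Prior A)))
      ⟨fun _ _ => 0, fun _ _ => le_rfl⟩
  refine h0.trans ?_
  calc ∫⁻ G, regretE (n := n) (fun _ _ => (0:ℝ)) G ∂(Q : Measure (Prior A))
      ≤ ∫⁻ _G, ENNReal.ofReal (A ^ 2) ∂(Q : Measure (Prior A)) := by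
        apply lintegral_mono
        intro G
        exact regretE_le_sq hA _ (fun x i => ⟨le_rfl, hA⟩) G
    _ = ENNReal.ofReal (A ^ 2) := by
        rw [lintegral_const, measure_univ, mul_one]

lemma exists_lfp (hA : 0 < A) :
    ∃ Qstar : ProbabilityMeasure (Prior A),
      BQ A n Qstar = ⨆ Q : ProbabilityMeasure (Prior A), BQ A n Q := by
  haveI hne : Nonempty (Set.Icc (0:ℝ) A) := ⟨⟨0, le_rfl, hA.le⟩⟩
  haveI : Nonempty (Prior A) :=
    ⟨⟨Measure.dirac (Classical.arbitrary _), inferInstance⟩⟩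
  haveI : Nonempty (ProbabilityMeasure (Prior A)) :=
    ⟨⟨Measure.dirac (Classical.arbitrary _), inferInstance⟩⟩
  set S := ⨆ Q : ProbabilityMeasure (Prior A), BQ A n Q with hS
  have hS_top : S ≠ ⊤ := by
    have : S ≤ ENNReal.ofReal (A ^ 2) := iSup_le fun Q => BQ_le hA.le Q
    exact (this.trans_lt ENNReal.ofReal_lt_top).ne
  have hseq : ∀ k : ℕ, ∃ Q : ProbabilityMeasure (Prior A),
      S - ENNReal.ofReal (1 / (k + 1)) ≤ BQ A n Q := by
    intro k
    by_cases h0 : S - ENNReal.ofReal (1 / (k + 1)) = 0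
    · exact ⟨Classical.arbitrary _, h0 ▸ zero_le⟩
    · have hS0 : S ≠ 0 := by
        intro h
        rw [h, zero_tsub] at h0
        exact h0 rfl
      have hlt : S - ENNReal.ofReal (1 / (k + 1)) < S := by
        apply ENNReal.sub_lt_self hS_top hS0
        simp only [ne_eq, ENNReal.ofReal_eq_zero, not_le]
        positivity
      rw [hS, lt_iSup_iff] at hlt
      obtain ⟨Q, hQ⟩ := hlt
      exact ⟨Q, hQ.le⟩
  choose Qs hQs using hseq
  obtain ⟨Qstar, ψ, hψ, hconv⟩ := Compat.seqcpt_hyper A Qs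
  refine ⟨Qstar, le_antisymm (le_iSup (BQ A n) Qstar) ?_⟩
  -- S ≤ BQ Qstar
  rw [BQ, iInf_clip hA.le]
  apply le_iInf
  intro est
  set Lc : ProbabilityMeasure (Prior A) → ℝ≥0∞ :=
    fun Q => ∫⁻ G, regretE (n := n) (clip A est.1) G ∂(Q : Measure (Prior A)) with hLc
  have hcont : Continuous Lc := continuous_lint_regret hA.le (clip_mem hA.le est)
  have hT : Tendsto (fun j => Lc (Qs (ψ j))) atTop (𝓝 (Lc Qstar)) :=
    (hcont.tendsto Qstar).comp hconv
  have hlow : ∀ j : ℕ, S - ENNReal.ofReal (1 / (j + 1)) ≤ Lc (Qs (ψ j)) := by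
    intro j
    have h1 : BQ A n (Qs (ψ j)) ≤ Lc (Qs (ψ j)) :=
      iInf_le (fun e : Est n => ∫⁻ G, regretE e.1 G ∂((Qs (ψ j)) : Measure (Prior A)))
        ⟨clip A est.1, fun x i => (clip_mem hA.le est x i).1⟩
    have h2 : S - ENNReal.ofReal (1 / (ψ j + 1)) ≤ BQ A n (Qs (ψ j)) := hQs (ψ j)
    have h3 : ENNReal.ofReal (1 / ((j:ℝ) + 1)) ≥ ENNReal.ofReal (1 / ((ψ j : ℝ) + 1)) := by
      apply ENNReal.ofReal_le_ofReal
      apply one_div_le_one_div_of_le (by positivity)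
      have h4 : j ≤ ψ j := hψ.le_apply
      have h5 : (j : ℝ) ≤ (ψ j : ℝ) := Nat.cast_le.mpr h4
      linarith
    calc S - ENNReal.ofReal (1 / (j + 1)) ≤ S - ENNReal.ofReal (1 / (ψ j + 1)) :=
          tsub_le_tsub_left h3 S
      _ ≤ BQ A n (Qs (ψ j)) := h2
      _ ≤ Lc (Qs (ψ j)) := h1
  have htend : Tendsto (fun j : ℕ => S - ENNReal.ofReal (1 / (j + 1))) atTop (𝓝 S) := by
    have h0 : Tendsto (fun j : ℕ => ENNReal.ofReal (1 / (j + 1))) atTop (𝓝 0) := by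
      have hr : Tendsto (fun j : ℕ => 1 / ((j:ℝ) + 1)) atTop (𝓝 0) :=
        tendsto_one_div_add_atTop_nhds_zero_nat
      have := (ENNReal.continuous_ofReal.tendsto 0).comp hr
      simpa [Function.comp_def] using this
    have := ENNReal.Tendsto.sub (tendsto_const_nhds (x := S)) h0 (Or.inl hS_top)
    simpa using this
  calc S = liminf (fun j : ℕ => S - ENNReal.ofReal (1 / (j + 1))) atTop := htend.liminf_eq.symm
    _ ≤ liminf (fun j => Lc (Qs (ψ j))) atTop := liminf_le_liminf (Eventually.of_forall hlow)
    _ = Lc Qstar := hT.liminf_eq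

end Reg

namespace Reg

open PoiSetup MeasureTheory Filter Topology
open scoped ENNReal NNReal

variable {A : ℝ} {n : ℕ}

lemma poi_zero_zero : poiPMF 0 0 = 1 := by
  unfold poiPMF; norm_num

lemma poi_zero_succ (m : ℕ) : poiPMF 0 (m + 1) = 0 := by
  unfold poiPMF
  rw [zero_pow (Nat.succ_ne_zero m)]
  simp

lemma poi_A_zero : poiPMF A 0 = Real.exp (-A) := by
  unfold poiPMF; norm_num

def diracP (θ : Set.Icc (0:ℝ) A) : Prior A := ⟨Measure.dirac θ, inferInstance⟩

lemma mix_diracP (θ : Set.Icc (0:ℝ) A) (m : ℕ) :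
    mix (diracP θ) m = poiPMF (θ : ℝ) m := by
  rw [mix]
  exact integral_dirac' _ θ ((poi_cont m).stronglyMeasurable)

lemma bayes_diracP_zero (hA : 0 ≤ A) (m : ℕ) :
    bayes (diracP (⟨0, le_rfl, hA⟩ : Set.Icc (0:ℝ) A)) m = 0 := by
  rw [bayes, mix_diracP]
  show ((m : ℝ) + 1) * poiPMF ((0:ℝ)) (m + 1) / _ = 0
  rw [poi_zero_succ m, mul_zero, zero_div]

lemma bayes_diracP_A (hA : 0 < A) (m : ℕ) :
    bayes (diracP (⟨A, hA.le, le_rfl⟩ : Set.Icc (0:ℝ) A)) m = A := by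
  rw [bayes, mix_diracP, mix_diracP]
  show ((m : ℝ) + 1) * poiPMF A (m + 1) / poiPMF A m = A
  unfold poiPMF
  rw [Nat.factorial_succ]
  have h1 : Real.exp (-A) ≠ 0 := Real.exp_ne_zero _
  have h2 : (Nat.factorial m : ℝ) ≠ 0 := by exact_mod_cast m.factorial_pos.ne'
  have h3 : ((m : ℝ) + 1) ≠ 0 := by positivity
  have h4 : A ^ m ≠ 0 := by positivity
  field_simp
  push_cast
  ring

lemma S_pos (hA : 0 < A) (hn : 1 ≤ n) :
    0 < ⨆ Q : ProbabilityMeasure (Prior A), BQ A n Q := by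
  set δ0 : Prior A := diracP (⟨0, le_rfl, hA.le⟩ : Set.Icc (0:ℝ) A) with hδ0
  set δA : Prior A := diracP (⟨A, hA.le, le_rfl⟩ : Set.Icc (0:ℝ) A) with hδA
  set μ2 : Measure (Prior A) :=
    (2⁻¹ : ℝ≥0∞) • Measure.dirac δ0 + (2⁻¹ : ℝ≥0∞) • Measure.dirac δA with hμ2
  have hprob : IsProbabilityMeasure μ2 := by
    constructor
    rw [hμ2]
    simp only [Measure.add_apply, Measure.smul_apply, smul_eq_mul,
      MeasureTheory.measure_univ, mul_one]
    exact ENNReal.inv_two_add_inv_two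
  set Q2 : ProbabilityMeasure (Prior A) := ⟨μ2, hprob⟩ with hQ2
  set x0 : Fin n → ℕ := fun _ => 0 with hx0
  set c : ℝ≥0∞ := 2⁻¹ * ENNReal.ofReal (Real.exp (-A)) ^ n * ENNReal.ofReal (A ^ 2 / 2)
    with hc
  have hcpos : 0 < c := by
    rw [hc]
    apply ENNReal.mul_pos
    · apply mul_ne_zero
      · simp
      · apply pow_ne_zero
        simp only [ne_eq, ENNReal.ofReal_eq_zero, not_le]
        positivity
    · simp only [ne_eq, ENNReal.ofReal_eq_zero, not_le]
      positivity
  have hlow : c ≤ BQ A n Q2 := by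
    apply le_iInf
    intro est
    -- decompose the integral
    have hdec : ∫⁻ G, regretE est.1 G ∂(Q2 : Measure (Prior A))
        = 2⁻¹ * regretE est.1 δ0 + 2⁻¹ * regretE est.1 δA := by
      show ∫⁻ G, regretE est.1 G ∂μ2 = _
      rw [hμ2, lintegral_add_measure, lintegral_smul_measure, lintegral_smul_measure,
        lintegral_dirac' _ (regretE_measurable est.1),
        lintegral_dirac' _ (regretE_measurable est.1), smul_eq_mul, smul_eq_mul]
    rw [hdec]
    -- lower bound each regret by the term at x0
    have h0 : ENNReal.ofReal ((n : ℝ)⁻¹ * ∑ i, (est.1 x0 i) ^ 2) ≤ regretE est.1 δ0 := by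
      rw [regretE]
      refine le_trans ?_ (ENNReal.le_tsum x0)
      have hw : ∀ j : Fin n, ENNReal.ofReal (mix δ0 (x0 j)) = 1 := by
        intro j
        rw [hδ0, mix_diracP]
        show ENNReal.ofReal (poiPMF 0 0) = 1
        rw [poi_zero_zero]; simp
      have hb : ∀ i : Fin n, bayes δ0 (x0 i) = 0 := fun i => bayes_diracP_zero hA.le 0
      rw [Finset.prod_congr rfl (fun j _ => hw j), Finset.prod_const_one, one_mul]
      apply ENNReal.ofReal_le_ofReal
      apply mul_le_mul_of_nonneg_left ?_ (by positivity)
      apply Finset.sum_le_sum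
      intro i _
      rw [hb i, sub_zero]
    have hA' : ENNReal.ofReal (Real.exp (-A)) ^ n
          * ENNReal.ofReal ((n : ℝ)⁻¹ * ∑ i, (est.1 x0 i - A) ^ 2) ≤ regretE est.1 δA := by
      rw [regretE]
      refine le_trans ?_ (ENNReal.le_tsum x0)
      have hw : ∀ j : Fin n, ENNReal.ofReal (mix δA (x0 j))
          = ENNReal.ofReal (Real.exp (-A)) := by
        intro j
        rw [hδA, mix_diracP]
        show ENNReal.ofReal (poiPMF A 0) = _
        rw [poi_A_zero]
      have hb : ∀ i : Fin n, bayes δA (x0 i) = A := fun i => bayes_diracP_A hA 0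
      rw [Finset.prod_congr rfl (fun j _ => hw j), Finset.prod_const, Finset.card_univ,
        Fintype.card_fin]
      apply mul_le_mul_right
      apply ENNReal.ofReal_le_ofReal
      apply mul_le_mul_of_nonneg_left ?_ (by positivity)
      apply Finset.sum_le_sum
      intro i _
      rw [hb i]
    -- combine
    have hexple : ENNReal.ofReal (Real.exp (-A)) ^ n ≤ 1 := by
      apply pow_le_one'
      rw [← ENNReal.ofReal_one]
      apply ENNReal.ofReal_le_ofReal
      exact Real.exp_le_one_iff.mpr (by linarith)
    have hsum : ENNReal.ofReal (A ^ 2 / 2)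
        ≤ ENNReal.ofReal ((n : ℝ)⁻¹ * ∑ i, (est.1 x0 i) ^ 2)
          + ENNReal.ofReal ((n : ℝ)⁻¹ * ∑ i, (est.1 x0 i - A) ^ 2) := by
      rw [← ENNReal.ofReal_add (by positivity) (by positivity)]
      apply ENNReal.ofReal_le_ofReal
      rw [← mul_add, ← Finset.sum_add_distrib]
      have key : ∀ i : Fin n, A ^ 2 / 2 ≤ (est.1 x0 i) ^ 2 + (est.1 x0 i - A) ^ 2 := by
        intro i
        nlinarith [sq_nonneg (2 * est.1 x0 i - A)]
      have hn0 : ((n : ℝ)) ≠ 0 := by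
        have : (0:ℝ) < n := by exact_mod_cast hn
        exact this.ne'
      calc A ^ 2 / 2 = (n : ℝ)⁻¹ * ∑ _i : Fin n, (A ^ 2 / 2) := by
            rw [Finset.sum_const, Finset.card_univ, Fintype.card_fin, nsmul_eq_mul,
              ← mul_assoc, inv_mul_cancel₀ hn0, one_mul]
        _ ≤ (n : ℝ)⁻¹ * ∑ i, ((est.1 x0 i) ^ 2 + (est.1 x0 i - A) ^ 2) :=
            mul_le_mul_of_nonneg_left (Finset.sum_le_sum fun i _ => key i) (by positivity)
    set Ee : ℝ≥0∞ := ENNReal.ofReal (Real.exp (-A)) with hEe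
    set a1 : ℝ≥0∞ := ENNReal.ofReal ((n : ℝ)⁻¹ * ∑ i, (est.1 x0 i) ^ 2) with ha1
    set b1 : ℝ≥0∞ := ENNReal.ofReal ((n : ℝ)⁻¹ * ∑ i, (est.1 x0 i - A) ^ 2) with hb1
    calc c = 2⁻¹ * (Ee ^ n * ENNReal.ofReal (A ^ 2 / 2)) := by rw [hc, mul_assoc]
      _ ≤ 2⁻¹ * (Ee ^ n * (a1 + b1)) :=
          mul_le_mul_right (mul_le_mul_right hsum _) _
      _ = 2⁻¹ * (Ee ^ n * a1) + 2⁻¹ * (Ee ^ n * b1) := by ring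
      _ ≤ 2⁻¹ * a1 + 2⁻¹ * (Ee ^ n * b1) := by
          apply add_le_add_left
          apply mul_le_mul_right
          calc Ee ^ n * a1 ≤ 1 * a1 := mul_le_mul_left hexple _
            _ = a1 := one_mul _
      _ ≤ 2⁻¹ * regretE est.1 δ0 + 2⁻¹ * regretE est.1 δA :=
          add_le_add (mul_le_mul_right h0 _) (mul_le_mul_right hA' _)
  have := hlow.trans (le_iSup (BQ A n) Q2)
  exact hcpos.trans_le this
end Reg

namespace Reg

open PoiSetup MeasureTheory Filter Topology
open scoped ENNReal NNReal

variable {A : ℝ} {n : ℕ}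

lemma mix_pos_iff (G : Prior A) (k : ℕ) :
    0 < mix G k ↔
      0 < (G : Measure (Set.Icc (0:ℝ) A))
        (Function.support fun θ : Set.Icc (0:ℝ) A => ENNReal.ofReal (poiPMF (θ:ℝ) k)) := by
  have h1 : 0 < mix G k ↔ 0 < ENNReal.ofReal (mix G k) := by
    rw [ENNReal.ofReal_pos]
  rw [h1, ofReal_mix, lintegral_pos_iff_support ((poi_cont k).measurable.ennreal_ofReal)]

lemma mix_pos_of_ne (G : Prior A) (h : mix G 1 ≠ 0) (m : ℕ) : 0 < mix G m := by
  have h1 : 0 < mix G 1 := lt_of_le_of_ne (mix_nonneg G 1) (Ne.symm h)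
  rw [mix_pos_iff] at h1 ⊢
  refine h1.trans_le (measure_mono ?_)
  intro θ hθ
  simp only [Function.mem_support, ne_eq, ENNReal.ofReal_eq_zero, not_le] at hθ ⊢
  have hθpos : 0 < (θ : ℝ) := by
    by_contra hc
    push_neg at hc
    have hθ0 : (θ : ℝ) = 0 := le_antisymm hc θ.2.1
    rw [hθ0] at hθ
    unfold poiPMF at hθ
    simp at hθ
  unfold poiPMF
  positivity

lemma wR_pos_of (G : Prior A) (h : mix G 1 ≠ 0) (x : Fin n → ℕ) : 0 < wR G x :=
  Finset.prod_pos fun j _ => mix_pos_of_ne G h (x j)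

lemma mix_chain_zero (G : Prior A) (h : mix G 1 = 0) (m : ℕ) : mix G (m + 1) = 0 := by
  induction m with
  | zero => exact h
  | succ k ih => exact mix_succ_zero G (k + 1) ih

lemma bayes_zero_of (G : Prior A) (h : mix G 1 = 0) (m : ℕ) : bayes G m = 0 := by
  rw [bayes, mix_chain_zero G h m, mul_zero, zero_div]

lemma regret_zero_est (G : Prior A) (h : mix G 1 = 0) :
    regretE (n := n) (fun _ _ => (0:ℝ)) G = 0 := by
  rw [regretE]
  apply ENNReal.tsum_eq_zero.mpr
  intro x
  have : ((n : ℝ)⁻¹ * ∑ i, ((0:ℝ) - bayes G (x i)) ^ 2) = 0 := by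
    have hz : ∀ i : Fin n, ((0:ℝ) - bayes G (x i)) ^ 2 = 0 := by
      intro i
      rw [bayes_zero_of G h (x i), sub_zero]
      norm_num
    rw [Finset.sum_congr rfl (fun i _ => hz i), Finset.sum_const, smul_zero, mul_zero]
  rw [this, ENNReal.ofReal_zero, mul_zero]

lemma Qstar_U_pos (hA : 0 < A) (hn : 1 ≤ n) (Qstar : ProbabilityMeasure (Prior A))
    (hstar : BQ A n Qstar = ⨆ Q : ProbabilityMeasure (Prior A), BQ A n Q) :
    0 < (Qstar : Measure (Prior A)) {G : Prior A | mix G 1 ≠ 0} := by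
  by_contra hcon
  push_neg at hcon
  have hzero : (Qstar : Measure (Prior A)) {G : Prior A | mix G 1 ≠ 0} = 0 :=
    le_antisymm hcon (zero_le)
  have hae : ∀ᵐ G ∂(Qstar : Measure (Prior A)), mix G 1 = 0 := by
    rw [ae_iff]
    exact hzero
  have hBQ0 : BQ A n Qstar = 0 := by
    apply le_antisymm ?_ (zero_le)
    have h1 : BQ A n Qstar
        ≤ ∫⁻ G, regretE (n := n) (fun _ _ => (0:ℝ)) G ∂(Qstar : Measure (Prior A)) :=
      iInf_le (fun est : Est n => ∫⁻ G, regretE est.1 G ∂(Qstar : Measure (Prior A)))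
        ⟨fun _ _ => 0, fun _ _ => le_rfl⟩
    have h2 : ∫⁻ G, regretE (n := n) (fun _ _ => (0:ℝ)) G ∂(Qstar : Measure (Prior A)) = 0 := by
      have : ∫⁻ G, regretE (n := n) (fun _ _ => (0:ℝ)) G ∂(Qstar : Measure (Prior A))
          = ∫⁻ _G, 0 ∂(Qstar : Measure (Prior A)) := by
        apply lintegral_congr_ae
        filter_upwards [hae] with G hG
        exact regret_zero_est G hG
      rw [this, lintegral_zero]
    exact h1.trans h2.le
  have hpos := S_pos (n := n) hA hn
  rw [← hstar, hBQ0] at hpos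
  exact lt_irrefl _ hpos

lemma Wstar_pos (hA : 0 < A) (hn : 1 ≤ n) (Qstar : ProbabilityMeasure (Prior A))
    (hstar : BQ A n Qstar = ⨆ Q : ProbabilityMeasure (Prior A), BQ A n Q) (x : Fin n → ℕ) :
    0 < ∫ G, wR G x ∂(Qstar : Measure (Prior A)) := by
  have h1 : 0 < ∫⁻ G, ENNReal.ofReal (wR G x) ∂(Qstar : Measure (Prior A)) := by
    rw [lintegral_pos_iff_support ((wR_measurable x).ennreal_ofReal)]
    refine (Qstar_U_pos hA hn Qstar hstar).trans_le (measure_mono ?_)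
    intro G hG
    simp only [Function.mem_support, ne_eq, ENNReal.ofReal_eq_zero, not_le]
    exact wR_pos_of G hG x
  have h2 : ENNReal.ofReal (∫ G, wR G x ∂(Qstar : Measure (Prior A)))
      = ∫⁻ G, ENNReal.ofReal (wR G x) ∂(Qstar : Measure (Prior A)) :=
    ofReal_integral_eq_lintegral_ofReal (int_w _ x)
      (Filter.Eventually.of_forall fun G => wR_nonneg G x)
  rw [← h2] at h1
  exact ENNReal.ofReal_pos.mp h1

end Reg

namespace Reg

open PoiSetup MeasureTheory Filter Topology
open scoped ENNReal NNReal

variable {A : ℝ} {n : ℕ}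

lemma integrable_dirac {f : Prior A → ℝ} (hm : Measurable f) (G : Prior A) :
    Integrable f (Measure.dirac G) := by
  refine ⟨hm.aestronglyMeasurable, ?_⟩
  rw [HasFiniteIntegral]
  rw [lintegral_dirac' G (f := fun a => ‖f a‖ₑ) hm.enorm]
  exact ENNReal.coe_lt_top

theorem minimax_key (hA : 0 < A) (hn : 1 ≤ n) (Qstar : ProbabilityMeasure (Prior A))
    (hstar : BQ A n Qstar = ⨆ Q : ProbabilityMeasure (Prior A), BQ A n Q) (G : Prior A) :
    regretE (n := n) (fun x i => hbayes (Qstar : Measure (Prior A)) x i) G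
      ≤ ⨆ Q : ProbabilityMeasure (Prior A), BQ A n Q := by
  set S := ⨆ Q : ProbabilityMeasure (Prior A), BQ A n Q with hS
  have hS_top : S ≠ ⊤ := by
    have : S ≤ ENNReal.ofReal (A ^ 2) := iSup_le fun Q => BQ_le hA.le Q
    exact (this.trans_lt ENNReal.ofReal_lt_top).ne
  -- the perturbed priors-on-priors
  set tk : ℕ → ℝ := fun k => 1 / (k + 1) with htk
  have htk_pos : ∀ k, 0 < tk k := fun k => by rw [htk]; positivity
  have htk_le : ∀ k, tk k ≤ 1 := by
    intro k
    rw [htk]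
    rw [div_le_one (by positivity)]
    have : (0:ℝ) ≤ (k:ℝ) := Nat.cast_nonneg k
    linarith
  set ak : ℕ → ℝ≥0∞ := fun k => ENNReal.ofReal (1 - tk k) with hak
  set bk : ℕ → ℝ≥0∞ := fun k => ENNReal.ofReal (tk k) with hbk
  have hab : ∀ k, ak k + bk k = 1 := by
    intro k
    rw [hak, hbk, ← ENNReal.ofReal_add (by linarith [htk_le k]) (htk_pos k).le]
    norm_num
  have hak_top : ∀ k, ak k ≠ ⊤ := fun k => ENNReal.ofReal_ne_top
  have hbk_top : ∀ k, bk k ≠ ⊤ := fun k => ENNReal.ofReal_ne_top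
  have hbk_ne : ∀ k, bk k ≠ 0 := by
    intro k
    rw [hbk]
    simp only [ne_eq, ENNReal.ofReal_eq_zero, not_le]
    exact htk_pos k
  set μt : ℕ → Measure (Prior A) :=
    fun k => ak k • (Qstar : Measure (Prior A)) + bk k • Measure.dirac G with hμt
  have hprob : ∀ k, IsProbabilityMeasure (μt k) := by
    intro k
    constructor
    rw [hμt]
    simp only [Measure.add_apply, Measure.smul_apply, smul_eq_mul,
      MeasureTheory.measure_univ, mul_one]
    exact hab k
  set estk : ℕ → (Fin n → ℕ) → Fin n → ℝ := fun k x i => hbayes (μt k) x i with hestk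
  -- key inequality for each k
  have key1 : ∀ k, regretE (n := n) (estk k) G ≤ S := by
    intro k
    haveI := hprob k
    have hopt : ∫⁻ G', regretE (n := n) (estk k) G' ∂(μt k)
        = ⨅ est : Est n, ∫⁻ G', regretE est.1 G' ∂(μt k) := bayes_opt_inf (μt k) hA.le
    have hBQ : (⨅ est : Est n, ∫⁻ G', regretE est.1 G' ∂(μt k)) ≤ S := by
      have : BQ A n ⟨μt k, hprob k⟩ ≤ S := le_iSup (BQ A n) ⟨μt k, hprob k⟩
      exact this
    have hdec : ∫⁻ G', regretE (n := n) (estk k) G' ∂(μt k)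
        = ak k * (∫⁻ G', regretE (n := n) (estk k) G' ∂(Qstar : Measure (Prior A)))
          + bk k * regretE (n := n) (estk k) G := by
      rw [hμt]
      rw [lintegral_add_measure, lintegral_smul_measure, lintegral_smul_measure,
        lintegral_dirac' _ (regretE_measurable (estk k)), smul_eq_mul, smul_eq_mul]
    have hge : S ≤ ∫⁻ G', regretE (n := n) (estk k) G' ∂(Qstar : Measure (Prior A)) := by
      rw [← hstar]
      exact iInf_le (fun est : Est n => ∫⁻ G', regretE est.1 G' ∂(Qstar : Measure (Prior A)))
        ⟨estk k, fun x i => hbayes_nonneg' (μt k) x i⟩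
    have hchain : ak k * S + bk k * regretE (n := n) (estk k) G ≤ ak k * S + bk k * S := by
      calc ak k * S + bk k * regretE (n := n) (estk k) G
          ≤ ak k * (∫⁻ G', regretE (n := n) (estk k) G' ∂(Qstar : Measure (Prior A)))
            + bk k * regretE (n := n) (estk k) G :=
            add_le_add_left (mul_le_mul_right hge _) _
        _ = ∫⁻ G', regretE (n := n) (estk k) G' ∂(μt k) := hdec.symm
        _ ≤ S := by rw [hopt]; exact hBQ
        _ = (ak k + bk k) * S := by rw [hab k, one_mul]
        _ = ak k * S + bk k * S := by rw [add_mul]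
    have h1 : bk k * regretE (n := n) (estk k) G ≤ bk k * S := by
      have hfin : ak k * S ≠ ⊤ := ENNReal.mul_ne_top (hak_top k) hS_top
      exact (ENNReal.add_le_add_iff_left hfin).mp hchain
    exact (ENNReal.mul_le_mul_iff_right (hbk_ne k) (hbk_top k)).mp h1
  -- pointwise convergence of the hierarchical Bayes estimators
  have htk0 : Tendsto tk atTop (𝓝 0) := tendsto_one_div_add_atTop_nhds_zero_nat
  have hconv : ∀ (x : Fin n → ℕ) (i : Fin n),
      Tendsto (fun k => estk k x i) atTop (𝓝 (hbayes (Qstar : Measure (Prior A)) x i)) := by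
    intro x i
    set Nstar := ∫ G', bayes G' (x i) * ∏ j, mix G' (x j) ∂(Qstar : Measure (Prior A))
      with hNstar
    set Wstar := ∫ G', ∏ j, mix G' (x j) ∂(Qstar : Measure (Prior A)) with hWstar
    have hWpos : 0 < Wstar := Wstar_pos hA hn Qstar hstar x
    have hintN : Integrable (fun G' : Prior A => bayes G' (x i) * ∏ j, mix G' (x j))
        (Qstar : Measure (Prior A)) := by
      have := int_wb (A := A) (Qstar : Measure (Prior A)) hA.le x i
      apply this.congr
      filter_upwards with G'
      rw [mul_comm]
      rfl
    have hintW : Integrable (fun G' : Prior A => ∏ j, mix G' (x j))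
        (Qstar : Measure (Prior A)) := int_w (Qstar : Measure (Prior A)) x
    have hmN : Measurable (fun G' : Prior A => bayes G' (x i) * ∏ j, mix G' (x j)) :=
      (bayes_measurable (x i)).mul (wR_measurable x)
    have hmW : Measurable (fun G' : Prior A => ∏ j, mix G' (x j)) := wR_measurable x
    have hNk : ∀ k, (∫ G', bayes G' (x i) * ∏ j, mix G' (x j) ∂(μt k))
        = (1 - tk k) * Nstar + tk k * (bayes G (x i) * ∏ j, mix G (x j)) := by
      intro k
      rw [hμt, integral_add_measure (hintN.smul_measure (hak_top k))
          ((integrable_dirac hmN G).smul_measure (hbk_top k)),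
        integral_smul_measure, integral_smul_measure,
        integral_dirac' _ G hmN.stronglyMeasurable]
      rw [hak, hbk, ENNReal.toReal_ofReal (by linarith [htk_le k]),
        ENNReal.toReal_ofReal (htk_pos k).le]
      rw [smul_eq_mul, smul_eq_mul, hNstar]
    have hWk : ∀ k, (∫ G', ∏ j, mix G' (x j) ∂(μt k))
        = (1 - tk k) * Wstar + tk k * (∏ j, mix G (x j)) := by
      intro k
      rw [hμt, integral_add_measure (hintW.smul_measure (hak_top k))
          ((integrable_dirac hmW G).smul_measure (hbk_top k)),
        integral_smul_measure, integral_smul_measure,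
        integral_dirac' _ G hmW.stronglyMeasurable]
      rw [hak, hbk, ENNReal.toReal_ofReal (by linarith [htk_le k]),
        ENNReal.toReal_ofReal (htk_pos k).le]
      rw [smul_eq_mul, smul_eq_mul, hWstar]
    have hnum : Tendsto (fun k => ∫ G', bayes G' (x i) * ∏ j, mix G' (x j) ∂(μt k))
        atTop (𝓝 Nstar) := by
      simp only [hNk]
      have h := (((tendsto_const_nhds (x := (1:ℝ))).sub htk0).mul
          (tendsto_const_nhds (x := Nstar))).add
        (htk0.mul (tendsto_const_nhds (x := bayes G (x i) * ∏ j, mix G (x j))))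
      simpa using h
    have hden : Tendsto (fun k => ∫ G', ∏ j, mix G' (x j) ∂(μt k)) atTop (𝓝 Wstar) := by
      simp only [hWk]
      have h := (((tendsto_const_nhds (x := (1:ℝ))).sub htk0).mul
          (tendsto_const_nhds (x := Wstar))).add
        (htk0.mul (tendsto_const_nhds (x := ∏ j, mix G (x j))))
      simpa using h
    have := hnum.div hden hWpos.ne'
    exact this
  -- pass to the limit
  rw [regretE_eq, ENNReal.tsum_eq_iSup_sum]
  apply iSup_le
  intro s
  have hsum_tendsto : Tendsto
      (fun k => ∑ x ∈ s, ENNReal.ofReal (ρ (estk k) x G)) atTop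
      (𝓝 (∑ x ∈ s, ENNReal.ofReal
        (ρ (fun x i => hbayes (Qstar : Measure (Prior A)) x i) x G))) := by
    apply tendsto_finset_sum
    intro x _
    apply (ENNReal.continuous_ofReal.tendsto _).comp
    have hsum_i : Tendsto
        (fun k => ∑ i, (estk k x i - bayes G (x i)) ^ 2) atTop
        (𝓝 (∑ i, ((hbayes (Qstar : Measure (Prior A)) x i) - bayes G (x i)) ^ 2)) := by
      apply tendsto_finset_sum
      intro i _
      exact ((hconv x i).sub tendsto_const_nhds).pow 2
    exact tendsto_const_nhds.mul (tendsto_const_nhds.mul hsum_i)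
  have hbound : ∀ k, ∑ x ∈ s, ENNReal.ofReal (ρ (estk k) x G) ≤ S := by
    intro k
    calc ∑ x ∈ s, ENNReal.ofReal (ρ (estk k) x G)
        ≤ ∑' x : Fin n → ℕ, ENNReal.ofReal (ρ (estk k) x G) := ENNReal.sum_le_tsum s
      _ = regretE (n := n) (estk k) G := (regretE_eq (estk k) G).symm
      _ ≤ S := key1 k
  exact le_of_tendsto hsum_tendsto (Eventually.of_forall hbound)

end Reg


/-- the minimax identity for the regret, with both the least favorable
prior-on-priors and the inner infimum (by the hierarchical Bayes estimator) attained. -/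
theorem stmt_4 (A : ℝ) (hA : 0 < A) (n : ℕ) (hn : 1 ≤ n) :
    ((⨅ est : Est n, ⨆ G : Prior A, regretE est.1 G) =
        ⨆ Q : ProbabilityMeasure (Prior A),
          ⨅ est : Est n, ∫⁻ G, regretE est.1 G ∂(Q : Measure (Prior A))) ∧
    (∃ Q : ProbabilityMeasure (Prior A),
        (⨅ est : Est n, ∫⁻ G, regretE est.1 G ∂(Q : Measure (Prior A))) =
          ⨅ est : Est n, ⨆ G : Prior A, regretE est.1 G) ∧
    ∀ Q : ProbabilityMeasure (Prior A),
      (∀ (x : Fin n → ℕ) (i : Fin n), 0 ≤ hbayes (Q : Measure (Prior A)) x i) ∧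
      ∫⁻ G, regretE (n := n) (fun x i => hbayes (Q : Measure (Prior A)) x i) G
          ∂(Q : Measure (Prior A)) =
        ⨅ est : Est n, ∫⁻ G, regretE est.1 G ∂(Q : Measure (Prior A)) := by
  obtain ⟨Qstar, hstar⟩ := Reg.exists_lfp (n := n) hA
  have hduality : (⨆ Q : ProbabilityMeasure (Prior A), Reg.BQ A n Q)
      ≤ ⨅ est : Est n, ⨆ G : Prior A, regretE est.1 G := by
    apply iSup_le
    intro Q
    apply le_iInf
    intro est
    refine (iInf_le (fun e : Est n =>
      ∫⁻ G, regretE e.1 G ∂(Q : Measure (Prior A))) est).trans ?_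
    calc ∫⁻ G, regretE est.1 G ∂(Q : Measure (Prior A))
        ≤ ∫⁻ _G, (⨆ G' : Prior A, regretE est.1 G') ∂(Q : Measure (Prior A)) :=
          lintegral_mono fun G => le_iSup (fun G' : Prior A => regretE est.1 G') G
      _ = ⨆ G' : Prior A, regretE est.1 G' := by
          rw [lintegral_const, measure_univ, mul_one]
  have hML : (⨅ est : Est n, ⨆ G : Prior A, regretE est.1 G)
      ≤ ⨆ Q : ProbabilityMeasure (Prior A), Reg.BQ A n Q := by
    refine (iInf_le (fun e : Est n => ⨆ G : Prior A, regretE e.1 G)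
      ⟨fun x i => hbayes (Qstar : Measure (Prior A)) x i,
        fun x i => Reg.hbayes_nonneg' _ x i⟩).trans ?_
    exact iSup_le (Reg.minimax_key hA hn Qstar hstar)
  have hMS : (⨅ est : Est n, ⨆ G : Prior A, regretE est.1 G)
      = ⨆ Q : ProbabilityMeasure (Prior A), Reg.BQ A n Q := le_antisymm hML hduality
  refine ⟨hMS, ⟨Qstar, ?_⟩, ?_⟩
  · show Reg.BQ A n Qstar = _
    rw [hstar]
    exact hMS.symm
  · intro Q
    exact ⟨fun x i => Reg.hbayes_nonneg' _ x i,
      Reg.bayes_opt_inf (Q : Measure (Prior A)) hA.le⟩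

end
end

section
/- Fix A > 0, B > 0, n ∈ ℕ, and a bounded estimator θ̂ : ℕⁿ → [0,B]ⁿ. Then the map G ↦ Regret(θ̂; G) is continuous on P([0,A]) with respect to the topology of weak convergence. -/
open MeasureTheory Real
open scoped BoundedContinuousFunction
open scoped ENNReal BigOperators

noncomputable section

/-- The regret of an estimator `est : ℕⁿ → ℝⁿ` against the prior `G`. -/
def regret {A : ℝ} {n : ℕ} (est : (Fin n → ℕ) → Fin n → ℝ) (G : Prior A) : ℝ :=
  ∑' x : Fin n → ℕ,
    (∏ j, mix G (x j)) * ((n : ℝ)⁻¹ * ∑ i, (est x i - bayes G (x i)) ^ 2)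

/-! ### Auxiliary lemmas -/

lemma poiPMF_continuous (x : ℕ) : Continuous fun θ : ℝ => poiPMF θ x := by
  unfold poiPMF
  exact ((Real.continuous_exp.comp continuous_neg).mul (continuous_pow x)).div_const _

/-- The Poisson pmf as a bounded continuous function on `[0, A]`. -/
def poiBCF (A : ℝ) (x : ℕ) : (Set.Icc (0 : ℝ) A) →ᵇ ℝ :=
  BoundedContinuousFunction.mkOfCompact
    ⟨fun θ => poiPMF (θ : ℝ) x, (poiPMF_continuous x).comp continuous_subtype_val⟩

lemma mix_eq_integral_bcf {A : ℝ} (G : Prior A) (x : ℕ) :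
    mix G x = ∫ θ, poiBCF A x θ ∂(G : Measure (Set.Icc (0 : ℝ) A)) := rfl

lemma continuous_mix {A : ℝ} (x : ℕ) : Continuous fun G : Prior A => mix G x := by
  simp only [mix_eq_integral_bcf]
  exact ProbabilityMeasure.continuous_integral_boundedContinuousFunction (poiBCF A x)

lemma poiPMF_nonneg {θ : ℝ} (hθ : 0 ≤ θ) (x : ℕ) : 0 ≤ poiPMF θ x :=
  div_nonneg (mul_nonneg (Real.exp_pos _).le (pow_nonneg hθ _)) (Nat.cast_nonneg _)

lemma poiPMF_le {A : ℝ} {θ : ℝ} (hθ0 : 0 ≤ θ) (hθA : θ ≤ A) (x : ℕ) :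
    poiPMF θ x ≤ A ^ x / (Nat.factorial x : ℝ) := by
  unfold poiPMF
  apply div_le_div_of_nonneg_right _ (by positivity)
  calc Real.exp (-θ) * θ ^ x ≤ 1 * θ ^ x := by
        apply mul_le_mul_of_nonneg_right _ (pow_nonneg hθ0 _)
        rw [Real.exp_le_one_iff]; linarith
    _ = θ ^ x := one_mul _
    _ ≤ A ^ x := pow_le_pow_left₀ hθ0 hθA x

lemma poiPMF_succ (θ : ℝ) (x : ℕ) :
    poiPMF θ (x + 1) = θ / ((x : ℝ) + 1) * poiPMF θ x := by
  unfold poiPMF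
  rw [Nat.factorial_succ, pow_succ]
  have h1 : ((x : ℝ) + 1) ≠ 0 := by positivity
  have h2 : ((Nat.factorial x : ℕ) : ℝ) ≠ 0 := by positivity
  push_cast
  field_simp

lemma poiPMF_succ_le {A : ℝ} {θ : ℝ} (hθ0 : 0 ≤ θ) (hθA : θ ≤ A) (x : ℕ) :
    poiPMF θ (x + 1) ≤ A / ((x : ℝ) + 1) * poiPMF θ x := by
  rw [poiPMF_succ]
  have h0 := poiPMF_nonneg hθ0 x
  have hx : (0 : ℝ) < (x : ℝ) + 1 := by positivity
  apply mul_le_mul_of_nonneg_right _ h0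
  gcongr

lemma poiPMF_integrable {A : ℝ} (G : Prior A) (x : ℕ) :
    Integrable (fun θ : Set.Icc (0 : ℝ) A => poiPMF (θ : ℝ) x)
      (G : Measure (Set.Icc (0 : ℝ) A)) :=
  (poiBCF A x).integrable _

lemma mix_nonneg {A : ℝ} (G : Prior A) (x : ℕ) : 0 ≤ mix G x :=
  integral_nonneg fun θ => poiPMF_nonneg θ.2.1 x

lemma mix_le {A : ℝ} (G : Prior A) (x : ℕ) : mix G x ≤ A ^ x / (Nat.factorial x : ℝ) := by
  have : mix G x ≤ ∫ _θ : Set.Icc (0 : ℝ) A, (A ^ x / (Nat.factorial x : ℝ))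
      ∂(G : Measure (Set.Icc (0 : ℝ) A)) := by
    apply integral_mono (poiPMF_integrable G x) (integrable_const _)
    exact fun θ => poiPMF_le θ.2.1 θ.2.2 x
  simpa using this

lemma mix_succ_le {A : ℝ} (G : Prior A) (x : ℕ) :
    mix G (x + 1) ≤ A / ((x : ℝ) + 1) * mix G x := by
  have : mix G (x + 1) ≤ ∫ θ : Set.Icc (0 : ℝ) A,
      A / ((x : ℝ) + 1) * poiPMF (θ : ℝ) x ∂(G : Measure (Set.Icc (0 : ℝ) A)) := by
    apply integral_mono (poiPMF_integrable G (x + 1))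
      ((poiPMF_integrable G x).const_mul _)
    exact fun θ => poiPMF_succ_le θ.2.1 θ.2.2 x
  rwa [integral_const_mul] at this

lemma succ_mix_succ_le {A : ℝ} (G : Prior A) (x : ℕ) :
    ((x : ℝ) + 1) * mix G (x + 1) ≤ A * mix G x := by
  have h := mix_succ_le G x
  have hx : (0 : ℝ) < (x : ℝ) + 1 := by positivity
  calc ((x : ℝ) + 1) * mix G (x + 1) ≤ ((x : ℝ) + 1) * (A / ((x : ℝ) + 1) * mix G x) :=
        mul_le_mul_of_nonneg_left h hx.le
    _ = A * mix G x := by field_simp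

lemma mix_succ_eq_zero {A : ℝ} {G : Prior A} {x : ℕ} (hA : 0 < A) (h : mix G x = 0) :
    mix G (x + 1) = 0 := by
  have h1 := mix_succ_le G x
  rw [h, mul_zero] at h1
  exact le_antisymm h1 (mix_nonneg G (x + 1))

lemma bayes_nonneg {A : ℝ} (G : Prior A) (x : ℕ) : 0 ≤ bayes G x := by
  unfold bayes
  have hx : (0 : ℝ) ≤ (x : ℝ) + 1 := by positivity
  exact div_nonneg (mul_nonneg hx (mix_nonneg G _)) (mix_nonneg G x)

lemma bayes_le {A : ℝ} (hA : 0 < A) (G : Prior A) (x : ℕ) : bayes G x ≤ A := by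
  unfold bayes
  rcases eq_or_lt_of_le (mix_nonneg G x) with h | h
  · rw [← h, div_zero]; exact hA.le
  · rw [div_le_iff₀ h]
    exact succ_mix_succ_le G x

/-- Key algebraic identity eliminating the division (up to a well-controlled quotient). -/
lemma mix_mul_sq_eq {A : ℝ} (hA : 0 < A) (G : Prior A) (x : ℕ) (c : ℝ) :
    mix G x * (c - bayes G x) ^ 2 =
      c ^ 2 * mix G x - 2 * c * (((x : ℝ) + 1) * mix G (x + 1)) +
        (((x : ℝ) + 1) * mix G (x + 1)) ^ 2 / mix G x := by
  rcases eq_or_lt_of_le (mix_nonneg G x) with h | h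
  · rw [← h, mix_succ_eq_zero hA h.symm]
    simp
  · unfold bayes
    field_simp
    ring

lemma continuous_quot {A : ℝ} (hA : 0 < A) (x : ℕ) :
    Continuous fun G : Prior A => (((x : ℝ) + 1) * mix G (x + 1)) ^ 2 / mix G x := by
  rw [continuous_iff_continuousAt]
  intro G₀
  rcases eq_or_lt_of_le (mix_nonneg G₀ x) with h | h
  · -- mix G₀ x = 0 : squeeze to zero
    have hval : (((x : ℝ) + 1) * mix G₀ (x + 1)) ^ 2 / mix G₀ x = 0 := by
      rw [mix_succ_eq_zero hA h.symm]; simp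
    have key : Filter.Tendsto (fun G : Prior A => (((x : ℝ) + 1) * mix G (x + 1)) ^ 2 / mix G x)
        (nhds G₀) (nhds 0) := by
      refine squeeze_zero (g := fun G : Prior A => A ^ 2 * mix G x) ?_ ?_ ?_
      · intro G
        exact div_nonneg (sq_nonneg _) (mix_nonneg G x)
      · intro G
        rcases eq_or_lt_of_le (mix_nonneg G x) with hG | hG
        · rw [← hG, div_zero]
          positivity
        · rw [div_le_iff₀ hG]
          have h1 : (((x : ℝ) + 1) * mix G (x + 1)) ^ 2 ≤ (A * mix G x) ^ 2 := by
            apply sq_le_sq'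
            · nlinarith [mix_nonneg G (x + 1), mix_nonneg G x, succ_mix_succ_le G x,
                Nat.cast_nonneg (α := ℝ) x]
            · exact succ_mix_succ_le G x
          calc (((x : ℝ) + 1) * mix G (x + 1)) ^ 2 ≤ (A * mix G x) ^ 2 := h1
            _ = A ^ 2 * mix G x * mix G x := by ring
      · have hc : Continuous fun G : Prior A => A ^ 2 * mix G x :=
          continuous_const.mul (continuous_mix x)
        simpa only [← h, mul_zero] using hc.tendsto G₀
    unfold ContinuousAt
    simpa only [hval] using key
  · exact ContinuousAt.div
      (((continuous_const.mul (continuous_mix (x + 1))).pow 2).continuousAt)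
      ((continuous_mix x).continuousAt) h.ne'

lemma continuous_mix_mul_sq {A : ℝ} (hA : 0 < A) (x : ℕ) (c : ℝ) :
    Continuous fun G : Prior A => mix G x * (c - bayes G x) ^ 2 := by
  have : (fun G : Prior A => mix G x * (c - bayes G x) ^ 2) =
      fun G : Prior A => c ^ 2 * mix G x - 2 * c * (((x : ℝ) + 1) * mix G (x + 1)) +
        (((x : ℝ) + 1) * mix G (x + 1)) ^ 2 / mix G x := by
    funext G; exact mix_mul_sq_eq hA G x c
  rw [this]
  exact ((continuous_const.mul (continuous_mix x)).sub
    (continuous_const.mul (continuous_const.mul (continuous_mix (x + 1))))).add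
    (continuous_quot hA x)

lemma summable_pi_prod {n : ℕ} {f : ℕ → ℝ} (hf : Summable f) (h0 : ∀ k, 0 ≤ f k) :
    Summable fun x : Fin n → ℕ => ∏ j, f (x j) := by
  induction n with
  | zero =>
    exact Summable.of_finite
  | succ n ih =>
    have hg : Summable fun p : ℕ × (Fin n → ℕ) => f p.1 * ∏ j, f (p.2 j) :=
      Summable.mul_of_nonneg (f := f) (g := fun y : Fin n → ℕ => ∏ j, f (y j)) hf ih h0
        (fun x => Finset.prod_nonneg fun j _ => h0 _)
    have := (Fin.consEquiv (fun _ : Fin (n + 1) => ℕ)).symm.summable_iff.mpr hg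
    apply Summable.congr this
    intro x
    simp [Fin.consEquiv, Fin.prod_univ_succ, Fin.tail, Function.comp]

set_option maxHeartbeats 2000000 in
/-- for a bounded estimator `θ̂ : ℕⁿ → [0,B]ⁿ`, the map `G ↦ Regret(θ̂; G)` is
continuous on `P([0,A])` with the topology of weak convergence. -/
theorem stmt_6 (A B : ℝ) (hA : 0 < A) (hB : 0 < B) (n : ℕ)
    (est : (Fin n → ℕ) → Fin n → ℝ) (hest : ∀ x i, est x i ∈ Set.Icc (0 : ℝ) B) :
    Continuous fun G : Prior A => regret est G := by
  unfold regret
  -- the summand, rewritten to expose cancellation of mix against bayes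
  set F : (Fin n → ℕ) → Prior A → ℝ := fun x G =>
    (∏ j, mix G (x j)) * ((n : ℝ)⁻¹ * ∑ i, (est x i - bayes G (x i)) ^ 2) with hF
  have hFrw : ∀ x (G : Prior A), F x G =
      (n : ℝ)⁻¹ * ∑ i, (∏ j ∈ Finset.univ.erase i, mix G (x j)) *
        (mix G (x i) * (est x i - bayes G (x i)) ^ 2) := by
    intro x G
    rw [hF]
    simp only
    rw [mul_left_comm]
    congr 1
    rw [Finset.mul_sum]
    refine Finset.sum_congr rfl fun i _ => ?_
    rw [← Finset.prod_erase_mul Finset.univ _ (Finset.mem_univ i), mul_assoc]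
  -- each summand is continuous
  have hFcont : ∀ x, Continuous (F x) := by
    intro x
    have : F x = fun G => (n : ℝ)⁻¹ * ∑ i, (∏ j ∈ Finset.univ.erase i, mix G (x j)) *
        (mix G (x i) * (est x i - bayes G (x i)) ^ 2) := funext fun G => hFrw x G
    rw [this]
    apply continuous_const.mul
    apply continuous_finset_sum
    intro i _
    exact (continuous_finset_prod _ fun j _ => continuous_mix (x j)).mul
      (continuous_mix_mul_sq hA (x i) (est x i))
  -- uniform summable bound
  set u : (Fin n → ℕ) → ℝ := fun x =>
    (A + B) ^ 2 * ∏ j, A ^ (x j) / (Nat.factorial (x j) : ℝ) with hu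
  have hsum : Summable u := by
    rw [hu]
    exact Summable.mul_left ((A + B) ^ 2)
      (summable_pi_prod (f := fun k => A ^ k / (Nat.factorial k : ℝ))
        (Real.summable_pow_div_factorial A) (fun k => by positivity))
  have hbound : ∀ x (G : Prior A), ‖F x G‖ ≤ u x := by
    intro x G
    have hprod0 : (0 : ℝ) ≤ ∏ j, mix G (x j) :=
      Finset.prod_nonneg fun j _ => mix_nonneg G _
    have hsq : ∀ i, (est x i - bayes G (x i)) ^ 2 ≤ (A + B) ^ 2 := by
      intro i
      apply sq_le_sq'
      · have h1 := (hest x i).1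
        have h2 := bayes_le hA G (x i)
        linarith
      · have h1 := (hest x i).2
        have h2 := bayes_nonneg G (x i)
        linarith
    have hFnn : 0 ≤ F x G := by
      rw [hF]
      apply mul_nonneg hprod0
      apply mul_nonneg (by positivity)
      exact Finset.sum_nonneg fun i _ => sq_nonneg _
    rw [Real.norm_eq_abs, abs_of_nonneg hFnn, hF]
    simp only
    have hinner : (n : ℝ)⁻¹ * ∑ i, (est x i - bayes G (x i)) ^ 2 ≤ (A + B) ^ 2 := by
      have h1 : ∑ i, (est x i - bayes G (x i)) ^ 2 ≤ ∑ _i : Fin n, (A + B) ^ 2 :=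
        Finset.sum_le_sum fun i _ => hsq i
      rw [Finset.sum_const, Finset.card_univ, Fintype.card_fin, nsmul_eq_mul] at h1
      rcases Nat.eq_zero_or_pos n with hn | hn
      · subst hn
        simp only [Nat.cast_zero, inv_zero, zero_mul]
        positivity
      · have hn' : (0 : ℝ) < n := by exact_mod_cast hn
        calc (n : ℝ)⁻¹ * ∑ i, (est x i - bayes G (x i)) ^ 2
            ≤ (n : ℝ)⁻¹ * ((n : ℝ) * (A + B) ^ 2) := by
              apply mul_le_mul_of_nonneg_left h1 (by positivity)
          _ = (A + B) ^ 2 := by field_simp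
    have hprodle : (∏ j, mix G (x j)) ≤ ∏ j, A ^ (x j) / (Nat.factorial (x j) : ℝ) :=
      Finset.prod_le_prod (fun j _ => mix_nonneg G _) (fun j _ => mix_le G _)
    calc (∏ j, mix G (x j)) * ((n : ℝ)⁻¹ * ∑ i, (est x i - bayes G (x i)) ^ 2)
        ≤ (∏ j, mix G (x j)) * (A + B) ^ 2 :=
          mul_le_mul_of_nonneg_left hinner hprod0
      _ ≤ (∏ j, A ^ (x j) / (Nat.factorial (x j) : ℝ)) * (A + B) ^ 2 :=
          mul_le_mul_of_nonneg_right hprodle (by positivity)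
      _ = u x := by rw [hu]; ring
  exact continuous_tsum (f := fun (x : Fin n → ℕ) (G : Prior A) => F x G) (u := u)
    hFcont hsum hbound
end
end

section
/- For every A > 0 there is a constant C = C(A) > 0 such that for every ε ∈ (0, e^{−e}) there exists a finite set S ⊆ P([0,A]) of cardinality at most exp(C · log²(1/ε) / log log(1/ε)) such that for every G ∈ P([0,A]) there is G' ∈ S with H(f_G, f_{G'}) ≤ ε. In other words, the ε-covering number of the class {f_G : G ∈ P([0,A])} of Poisson mixtures under the Hellinger metric satisfies log N(ε) ≤ C · log²(1/ε) / log log(1/ε). -/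
open MeasureTheory Real
open scoped ENNReal BigOperators

noncomputable section

/-- Squared Hellinger distance between pmfs on `ℕ`. -/
def hellSq (p q : ℕ → ℝ) : ℝ := ∑' x, (Real.sqrt (p x) - Real.sqrt (q x)) ^ 2

namespace Stmt8

/-- elementary: (√p−√q)² ≤ |p−q| for nonneg p q -/
lemma sq_sub_sqrt_le_abs {p q : ℝ} (hp : 0 ≤ p) (hq : 0 ≤ q) :
    (Real.sqrt p - Real.sqrt q) ^ 2 ≤ |p - q| := by
  have h1 : |p - q| = |Real.sqrt p - Real.sqrt q| * (Real.sqrt p + Real.sqrt q) := by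
    have : p - q = (Real.sqrt p - Real.sqrt q) * (Real.sqrt p + Real.sqrt q) := by
      have := Real.sq_sqrt hp; have := Real.sq_sqrt hq; nlinarith
    rw [this, abs_mul, abs_of_nonneg (show (0:ℝ) ≤ Real.sqrt p + Real.sqrt q by positivity)]
  have h2 : |Real.sqrt p - Real.sqrt q| ≤ Real.sqrt p + Real.sqrt q := by
    have := abs_sub_abs_le_abs_sub (Real.sqrt p) (Real.sqrt q)
    rw [abs_sub_le_iff]
    constructor <;> nlinarith [Real.sqrt_nonneg p, Real.sqrt_nonneg q]
  calc (Real.sqrt p - Real.sqrt q) ^ 2 = |Real.sqrt p - Real.sqrt q| * |Real.sqrt p - Real.sqrt q| := by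
        rw [← abs_mul, sq, abs_mul_self]
    _ ≤ |Real.sqrt p - Real.sqrt q| * (Real.sqrt p + Real.sqrt q) := by
        apply mul_le_mul_of_nonneg_left h2 (abs_nonneg _)
    _ = |p - q| := h1.symm

lemma sq_sub_sqrt_le_add {p q : ℝ} (hp : 0 ≤ p) (hq : 0 ≤ q) :
    (Real.sqrt p - Real.sqrt q) ^ 2 ≤ p + q := by
  have h1 := Real.sq_sqrt hp
  have h2 := Real.sq_sqrt hq
  nlinarith [Real.sqrt_nonneg p, Real.sqrt_nonneg q, mul_nonneg (Real.sqrt_nonneg p) (Real.sqrt_nonneg q)]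

/-- exp series remainder bound -/
lemma exp_remainder (t : ℝ) (ht : 0 ≤ t) (m : ℕ) :
    |Real.exp (-t) - ∑ k ∈ Finset.range m, (-t) ^ k / (Nat.factorial k : ℝ)| ≤
      t ^ m / (Nat.factorial m : ℝ) * Real.exp t := by
  have hsum : Summable (fun k : ℕ => (-t) ^ k / (Nat.factorial k : ℝ)) :=
    Real.summable_pow_div_factorial _
  have hexp : Real.exp (-t) = ∑' k : ℕ, (-t) ^ k / (Nat.factorial k : ℝ) := by
    rw [Real.exp_eq_exp_ℝ, NormedSpace.exp_eq_tsum_div]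
  have hsplit := Summable.sum_add_tsum_nat_add (f := fun k : ℕ => (-t) ^ k / (Nat.factorial k : ℝ)) m hsum
  have hdiff : Real.exp (-t) - ∑ k ∈ Finset.range m, (-t) ^ k / (Nat.factorial k : ℝ)
      = ∑' k : ℕ, (-t) ^ (k + m) / (Nat.factorial (k + m) : ℝ) := by
    rw [hexp, ← hsplit]; ring
  rw [hdiff]
  have habs : ∀ k : ℕ, |(-t) ^ (k + m) / (Nat.factorial (k + m) : ℝ)| ≤
      t ^ m / (Nat.factorial m : ℝ) * (t ^ k / (Nat.factorial k : ℝ)) := by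
    intro k
    have hfac : (Nat.factorial k * Nat.factorial m : ℝ) ≤ (Nat.factorial (k + m) : ℝ) := by
      exact_mod_cast Nat.le_of_dvd (Nat.factorial_pos _) (Nat.factorial_mul_factorial_dvd_factorial_add k m)
    have h0 : |(-t) ^ (k + m) / (Nat.factorial (k + m) : ℝ)| = t ^ (k + m) / (Nat.factorial (k + m) : ℝ) := by
      rw [abs_div, abs_pow, abs_neg, abs_of_nonneg ht, abs_of_nonneg (by positivity)]
    rw [h0, pow_add]
    have hrhs : t ^ m / (Nat.factorial m : ℝ) * (t ^ k / (Nat.factorial k : ℝ))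
        = t ^ k * t ^ m / ((Nat.factorial k : ℝ) * (Nat.factorial m : ℝ)) := by ring
    rw [hrhs]
    apply div_le_div_of_nonneg_left (by positivity) (by positivity) hfac
  have hsumm : Summable (fun k : ℕ => t ^ m / (Nat.factorial m : ℝ) * (t ^ k / (Nat.factorial k : ℝ))) :=
    (Real.summable_pow_div_factorial t).mul_left _
  have hsummabs : Summable (fun k : ℕ => |(-t) ^ (k + m) / (Nat.factorial (k + m) : ℝ)|) := by
    apply Summable.of_nonneg_of_le (fun k => abs_nonneg _) habs hsumm
  calc |∑' k : ℕ, (-t) ^ (k + m) / (Nat.factorial (k + m) : ℝ)|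
      ≤ ∑' k : ℕ, |(-t) ^ (k + m) / (Nat.factorial (k + m) : ℝ)| := by
        have hn : Summable (fun k : ℕ => ‖(-t) ^ (k + m) / (Nat.factorial (k + m) : ℝ)‖) := by
          simpa only [Real.norm_eq_abs] using hsummabs
        simpa only [Real.norm_eq_abs] using norm_tsum_le_tsum_norm hn
    _ ≤ ∑' k : ℕ, t ^ m / (Nat.factorial m : ℝ) * (t ^ k / (Nat.factorial k : ℝ)) :=
        Summable.tsum_le_tsum habs hsummabs hsumm
    _ = t ^ m / (Nat.factorial m : ℝ) * ∑' k : ℕ, t ^ k / (Nat.factorial k : ℝ) := tsum_mul_left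
    _ ≤ t ^ m / (Nat.factorial m : ℝ) * Real.exp t := by
        apply mul_le_mul_of_nonneg_left _ (by positivity)
        apply Summable.tsum_le_of_sum_range_le (Real.summable_pow_div_factorial t)
        exact fun n => Real.sum_le_exp_of_nonneg ht n



variable {A : ℝ}

/-- moments of a prior -/
def mom (G : Prior A) (j : ℕ) : ℝ :=
  ∫ θ : Set.Icc (0 : ℝ) A, (θ : ℝ) ^ j ∂(G : Measure (Set.Icc (0 : ℝ) A))

lemma integrable_of_bdd (G : Prior A) {f : Set.Icc (0 : ℝ) A → ℝ} (hf : Continuous f)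
    (C : ℝ) (hC : ∀ θ, |f θ| ≤ C) :
    Integrable f (G : Measure (Set.Icc (0 : ℝ) A)) := by
  refine (integrable_const C).mono' hf.aestronglyMeasurable ?_
  exact Filter.Eventually.of_forall fun θ => by simpa [Real.norm_eq_abs] using hC θ

lemma continuous_pow_val (j : ℕ) : Continuous (fun θ : Set.Icc (0 : ℝ) A => (θ : ℝ) ^ j) :=
  (continuous_subtype_val).pow j

lemma integrable_pow (G : Prior A) (hA : 0 < A) (j : ℕ) :
    Integrable (fun θ : Set.Icc (0 : ℝ) A => (θ : ℝ) ^ j) (G : Measure (Set.Icc (0 : ℝ) A)) := by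
  refine integrable_of_bdd G (continuous_pow_val j) (A ^ j) fun θ => ?_
  rw [abs_of_nonneg (pow_nonneg θ.2.1 j)]
  exact pow_le_pow_left₀ θ.2.1 θ.2.2 j

lemma continuous_poi (x : ℕ) : Continuous (fun θ : Set.Icc (0 : ℝ) A => poiPMF (θ : ℝ) x) := by
  unfold poiPMF
  exact ((Real.continuous_exp.comp continuous_subtype_val.neg).mul
    (continuous_subtype_val.pow x)).div_const _

lemma poi_nonneg {θ : ℝ} (hθ : 0 ≤ θ) (x : ℕ) : 0 ≤ poiPMF θ x := by
  unfold poiPMF; positivity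

lemma poi_le (hA : 0 < A) (θ : Set.Icc (0 : ℝ) A) (x : ℕ) :
    poiPMF (θ : ℝ) x ≤ A ^ x / (Nat.factorial x : ℝ) := by
  unfold poiPMF
  have h1 : Real.exp (-(θ:ℝ)) * (θ:ℝ) ^ x ≤ A ^ x := by
    have he : Real.exp (-(θ:ℝ)) ≤ 1 := Real.exp_le_one_iff.mpr (neg_nonpos.mpr θ.2.1)
    calc Real.exp (-(θ:ℝ)) * (θ:ℝ) ^ x ≤ 1 * (θ:ℝ) ^ x :=
        mul_le_mul_of_nonneg_right he (pow_nonneg θ.2.1 x)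
      _ = (θ:ℝ) ^ x := one_mul _
      _ ≤ A ^ x := pow_le_pow_left₀ θ.2.1 θ.2.2 x
  have hx : (0:ℝ) < (Nat.factorial x : ℝ) := by positivity
  exact div_le_div_of_nonneg_right h1 hx.le

lemma integrable_poi (G : Prior A) (hA : 0 < A) (x : ℕ) :
    Integrable (fun θ : Set.Icc (0 : ℝ) A => poiPMF (θ : ℝ) x) (G : Measure (Set.Icc (0 : ℝ) A)) := by
  refine integrable_of_bdd G (continuous_poi x) (A ^ x / (Nat.factorial x : ℝ)) fun θ => ?_
  rw [abs_of_nonneg (poi_nonneg θ.2.1 x)]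
  exact poi_le hA θ x

lemma mix_nonneg (G : Prior A) (x : ℕ) : 0 ≤ mix G x :=
  integral_nonneg fun θ => poi_nonneg θ.2.1 x

lemma mix_le (G : Prior A) (hA : 0 < A) (x : ℕ) :
    mix G x ≤ A ^ x / (Nat.factorial x : ℝ) := by
  have h := norm_integral_le_of_norm_le_const (μ := (G : Measure (Set.Icc (0 : ℝ) A)))
    (f := fun θ : Set.Icc (0 : ℝ) A => poiPMF (θ : ℝ) x) (C := A ^ x / (Nat.factorial x : ℝ))
    (Filter.Eventually.of_forall fun θ => by
      rw [Real.norm_eq_abs, abs_of_nonneg (poi_nonneg θ.2.1 x)]; exact poi_le hA θ x)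
  rw [probReal_univ, mul_one] at h
  calc mix G x ≤ |mix G x| := le_abs_self _
    _ ≤ A ^ x / (Nat.factorial x : ℝ) := by simpa [Real.norm_eq_abs, mix] using h

lemma mom_zero (G : Prior A) : mom G 0 = 1 := by
  simp [mom]

lemma mom_nonneg (G : Prior A) (j : ℕ) : 0 ≤ mom G j :=
  integral_nonneg fun θ => pow_nonneg θ.2.1 j

lemma mom_le (G : Prior A) (hA : 0 < A) (j : ℕ) : mom G j ≤ A ^ j := by
  have h := norm_integral_le_of_norm_le_const (μ := (G : Measure (Set.Icc (0 : ℝ) A)))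
    (f := fun θ : Set.Icc (0 : ℝ) A => (θ : ℝ) ^ j) (C := A ^ j)
    (Filter.Eventually.of_forall fun θ => by
      rw [Real.norm_eq_abs, abs_of_nonneg (pow_nonneg θ.2.1 j)]
      exact pow_le_pow_left₀ θ.2.1 θ.2.2 j)
  rw [probReal_univ, mul_one] at h
  calc mom G j ≤ |mom G j| := le_abs_self _
    _ ≤ A ^ j := by simpa [Real.norm_eq_abs, mom] using h


end Stmt8

namespace Stmt8
variable {A : ℝ}

lemma poly_term_integrable (G : Prior A) (hA : 0 < A) (x k : ℕ) :
    Integrable (fun θ : Set.Icc (0 : ℝ) A =>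
      (-1 : ℝ) ^ k / ((Nat.factorial x : ℝ) * (Nat.factorial k : ℝ)) * (θ : ℝ) ^ (x + k))
      (G : Measure (Set.Icc (0 : ℝ) A)) :=
  (integrable_pow G hA (x + k)).const_mul _

/-- decomposition of mix into moment polynomial plus remainder integral -/
lemma mix_decomp (G : Prior A) (hA : 0 < A) (n x : ℕ) (hx : x < n) :
    ∃ r : ℝ, |r| ≤ 2 * A ^ n * Real.exp A / ((Nat.factorial x : ℝ) * (Nat.factorial (n - x) : ℝ)) ∧
      mix G x = (∑ k ∈ Finset.range (n - x),
        (-1 : ℝ) ^ k / ((Nat.factorial x : ℝ) * (Nat.factorial k : ℝ)) * mom G (x + k)) + r := by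
  classical
  set P : Set.Icc (0 : ℝ) A → ℝ := fun θ => ∑ k ∈ Finset.range (n - x),
    (-1 : ℝ) ^ k / ((Nat.factorial x : ℝ) * (Nat.factorial k : ℝ)) * (θ : ℝ) ^ (x + k) with hP
  set R : Set.Icc (0 : ℝ) A → ℝ := fun θ => poiPMF (θ : ℝ) x - P θ with hR
  have hPint : Integrable P (G : Measure (Set.Icc (0 : ℝ) A)) :=
    integrable_finset_sum _ (fun k _ => poly_term_integrable G hA x k)
  have hRint : Integrable R (G : Measure (Set.Icc (0 : ℝ) A)) :=
    (integrable_poi G hA x).sub hPint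
  have hRbound : ∀ θ : Set.Icc (0 : ℝ) A,
      |R θ| ≤ A ^ n * Real.exp A / ((Nat.factorial x : ℝ) * (Nat.factorial (n - x) : ℝ)) := by
    intro θ
    have hθ0 : (0:ℝ) ≤ (θ:ℝ) := θ.2.1
    have hθA : (θ:ℝ) ≤ A := θ.2.2
    have hfact : R θ = (θ:ℝ) ^ x / (Nat.factorial x : ℝ) *
        (Real.exp (-(θ:ℝ)) - ∑ k ∈ Finset.range (n - x), (-(θ:ℝ)) ^ k / (Nat.factorial k : ℝ)) := by
      rw [hR]
      simp only [hP, poiPMF]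
      rw [mul_sub, Finset.mul_sum]
      congr 1
      · ring
      congr 1
      ext k
      rw [neg_pow, pow_add]
      ring
    rw [hfact, abs_mul]
    have h1 : |(θ:ℝ) ^ x / (Nat.factorial x : ℝ)| ≤ A ^ x / (Nat.factorial x : ℝ) := by
      rw [abs_of_nonneg (by positivity)]
      exact div_le_div_of_nonneg_right (pow_le_pow_left₀ hθ0 hθA x) (by positivity)
    have h2 := exp_remainder (θ:ℝ) hθ0 (n - x)
    have h2' : |Real.exp (-(θ:ℝ)) - ∑ k ∈ Finset.range (n - x), (-(θ:ℝ)) ^ k / (Nat.factorial k : ℝ)|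
        ≤ A ^ (n - x) / (Nat.factorial (n - x) : ℝ) * Real.exp A := by
      refine h2.trans ?_
      have := pow_le_pow_left₀ hθ0 hθA (n - x)
      have := Real.exp_le_exp.mpr hθA
      have h3 : (0:ℝ) < (Nat.factorial (n-x) : ℝ) := by positivity
      apply mul_le_mul (div_le_div_of_nonneg_right (pow_le_pow_left₀ hθ0 hθA (n-x)) h3.le)
        (Real.exp_le_exp.mpr hθA) (Real.exp_nonneg _) (by positivity)
    calc |(θ:ℝ) ^ x / (Nat.factorial x : ℝ)| * |_| ≤
        (A ^ x / (Nat.factorial x : ℝ)) * (A ^ (n - x) / (Nat.factorial (n - x) : ℝ) * Real.exp A) := by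
          exact mul_le_mul h1 h2' (abs_nonneg _) (by positivity)
      _ = A ^ x * A ^ (n - x) * Real.exp A / ((Nat.factorial x : ℝ) * (Nat.factorial (n - x) : ℝ)) := by
          ring
      _ = A ^ n * Real.exp A / ((Nat.factorial x : ℝ) * (Nat.factorial (n - x) : ℝ)) := by
          rw [← pow_add A x (n - x), Nat.add_sub_cancel' hx.le]
  refine ⟨∫ θ, R θ ∂(G : Measure (Set.Icc (0 : ℝ) A)), ?_, ?_⟩
  · have h := norm_integral_le_of_norm_le_const (μ := (G : Measure (Set.Icc (0 : ℝ) A)))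
      (f := R) (C := A ^ n * Real.exp A / ((Nat.factorial x : ℝ) * (Nat.factorial (n - x) : ℝ)))
      (Filter.Eventually.of_forall fun θ => by rw [Real.norm_eq_abs]; exact hRbound θ)
    rw [probReal_univ, mul_one] at h
    rw [Real.norm_eq_abs] at h
    refine h.trans ?_
    have hE : 2 * A ^ n * Real.exp A / ((Nat.factorial x : ℝ) * (Nat.factorial (n - x) : ℝ))
        = 2 * (A ^ n * Real.exp A / ((Nat.factorial x : ℝ) * (Nat.factorial (n - x) : ℝ))) := by
      ring
    have : (0:ℝ) ≤ A ^ n * Real.exp A / ((Nat.factorial x : ℝ) * (Nat.factorial (n - x) : ℝ)) := by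
      positivity
    rw [hE]; linarith
  · have : mix G x = ∫ θ, (P θ + R θ) ∂(G : Measure (Set.Icc (0 : ℝ) A)) := by
      unfold mix
      congr 1
      ext θ
      simp [hR]
    rw [this, integral_add hPint hRint]
    congr 1
    rw [integral_finset_sum _ (fun k _ => poly_term_integrable G hA x k)]
    refine Finset.sum_congr rfl fun k _ => ?_
    rw [integral_const_mul]
    rfl

end Stmt8

namespace Stmt8
variable {A : ℝ}

lemma pow_div_factorial_add (a : ℝ) (ha : 0 ≤ a) (x n : ℕ) :
    a ^ (x + n) / (Nat.factorial (x + n) : ℝ)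
      ≤ a ^ n / (Nat.factorial n : ℝ) * (a ^ x / (Nat.factorial x : ℝ)) := by
  have hfac : (Nat.factorial x * Nat.factorial n : ℝ) ≤ (Nat.factorial (x + n) : ℝ) := by
    exact_mod_cast Nat.le_of_dvd (Nat.factorial_pos _)
      (Nat.factorial_mul_factorial_dvd_factorial_add x n)
  have h1 : a ^ n / (Nat.factorial n : ℝ) * (a ^ x / (Nat.factorial x : ℝ))
      = a ^ (x + n) / ((Nat.factorial x : ℝ) * (Nat.factorial n : ℝ)) := by
    rw [pow_add]; ring
  rw [h1]
  exact div_le_div_of_nonneg_left (by positivity) (by positivity) hfac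

lemma sum_inv_factorial_le (m : ℕ) :
    ∑ k ∈ Finset.range m, (1 : ℝ) / (Nat.factorial k : ℝ) ≤ Real.exp 1 := by
  have := Real.sum_le_exp_of_nonneg zero_le_one m
  simpa using this

lemma mix_close (G G' : Prior A) (hA : 0 < A) (n x : ℕ) (hx : x < n) (τ : ℝ)
    (hmom : ∀ j, j ≤ n - 1 → |mom G j - mom G' j| ≤ τ) :
    |mix G x - mix G' x| ≤ Real.exp 1 * τ / (Nat.factorial x : ℝ)
      + 4 * A ^ n * Real.exp A / ((Nat.factorial x : ℝ) * (Nat.factorial (n - x) : ℝ)) := by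
  have hτ : 0 ≤ τ := (abs_nonneg _).trans (hmom 0 (Nat.zero_le _))
  obtain ⟨r, hr, hG⟩ := mix_decomp G hA n x hx
  obtain ⟨r', hr', hG'⟩ := mix_decomp G' hA n x hx
  rw [hG, hG']
  have hsum : |(∑ k ∈ Finset.range (n - x),
        (-1 : ℝ) ^ k / ((Nat.factorial x : ℝ) * (Nat.factorial k : ℝ)) * mom G (x + k))
      - ∑ k ∈ Finset.range (n - x),
        (-1 : ℝ) ^ k / ((Nat.factorial x : ℝ) * (Nat.factorial k : ℝ)) * mom G' (x + k)|
      ≤ Real.exp 1 * τ / (Nat.factorial x : ℝ) := by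
    rw [← Finset.sum_sub_distrib]
    refine (Finset.abs_sum_le_sum_abs _ _).trans ?_
    have hterm : ∀ k ∈ Finset.range (n - x),
        |(-1 : ℝ) ^ k / ((Nat.factorial x : ℝ) * (Nat.factorial k : ℝ)) * mom G (x + k)
          - (-1 : ℝ) ^ k / ((Nat.factorial x : ℝ) * (Nat.factorial k : ℝ)) * mom G' (x + k)|
        ≤ τ / ((Nat.factorial x : ℝ) * (Nat.factorial k : ℝ)) := by
      intro k hk
      rw [← mul_sub, abs_mul, abs_div, abs_pow, abs_neg, abs_one, one_pow]
      rw [abs_of_nonneg (show (0:ℝ) ≤ (Nat.factorial x : ℝ) * (Nat.factorial k : ℝ) by positivity)]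
      have hjk : x + k ≤ n - 1 := by
        have := Finset.mem_range.mp hk; omega
      calc 1 / ((Nat.factorial x : ℝ) * (Nat.factorial k : ℝ)) * |mom G (x + k) - mom G' (x + k)|
          ≤ 1 / ((Nat.factorial x : ℝ) * (Nat.factorial k : ℝ)) * τ :=
            mul_le_mul_of_nonneg_left (hmom _ hjk) (by positivity)
        _ = τ / ((Nat.factorial x : ℝ) * (Nat.factorial k : ℝ)) := by ring
    refine (Finset.sum_le_sum hterm).trans ?_
    have heq : ∑ k ∈ Finset.range (n - x), τ / ((Nat.factorial x : ℝ) * (Nat.factorial k : ℝ))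
        = τ / (Nat.factorial x : ℝ) * ∑ k ∈ Finset.range (n - x), (1:ℝ) / (Nat.factorial k : ℝ) := by
      rw [Finset.mul_sum]
      refine Finset.sum_congr rfl fun k _ => ?_
      ring
    rw [heq]
    calc τ / (Nat.factorial x : ℝ) * ∑ k ∈ Finset.range (n - x), (1:ℝ) / (Nat.factorial k : ℝ)
        ≤ τ / (Nat.factorial x : ℝ) * Real.exp 1 :=
          mul_le_mul_of_nonneg_left (sum_inv_factorial_le _) (by positivity)
      _ = Real.exp 1 * τ / (Nat.factorial x : ℝ) := by ring
  have habs : |(∑ k ∈ Finset.range (n - x),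
        (-1 : ℝ) ^ k / ((Nat.factorial x : ℝ) * (Nat.factorial k : ℝ)) * mom G (x + k)) + r
      - ((∑ k ∈ Finset.range (n - x),
        (-1 : ℝ) ^ k / ((Nat.factorial x : ℝ) * (Nat.factorial k : ℝ)) * mom G' (x + k)) + r')|
      ≤ |(∑ k ∈ Finset.range (n - x),
        (-1 : ℝ) ^ k / ((Nat.factorial x : ℝ) * (Nat.factorial k : ℝ)) * mom G (x + k))
      - ∑ k ∈ Finset.range (n - x),
        (-1 : ℝ) ^ k / ((Nat.factorial x : ℝ) * (Nat.factorial k : ℝ)) * mom G' (x + k)|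
        + |r| + |r'| := by
    calc _ ≤ |(∑ k ∈ Finset.range (n - x),
        (-1 : ℝ) ^ k / ((Nat.factorial x : ℝ) * (Nat.factorial k : ℝ)) * mom G (x + k))
      - ∑ k ∈ Finset.range (n - x),
        (-1 : ℝ) ^ k / ((Nat.factorial x : ℝ) * (Nat.factorial k : ℝ)) * mom G' (x + k)|
        + |r - r'| := by
          have := abs_add_le ((∑ k ∈ Finset.range (n - x),
            (-1 : ℝ) ^ k / ((Nat.factorial x : ℝ) * (Nat.factorial k : ℝ)) * mom G (x + k))
            - ∑ k ∈ Finset.range (n - x),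
            (-1 : ℝ) ^ k / ((Nat.factorial x : ℝ) * (Nat.factorial k : ℝ)) * mom G' (x + k)) (r - r')
          have heq : (∑ k ∈ Finset.range (n - x),
            (-1 : ℝ) ^ k / ((Nat.factorial x : ℝ) * (Nat.factorial k : ℝ)) * mom G (x + k)) + r
            - ((∑ k ∈ Finset.range (n - x),
            (-1 : ℝ) ^ k / ((Nat.factorial x : ℝ) * (Nat.factorial k : ℝ)) * mom G' (x + k)) + r')
            = ((∑ k ∈ Finset.range (n - x),
            (-1 : ℝ) ^ k / ((Nat.factorial x : ℝ) * (Nat.factorial k : ℝ)) * mom G (x + k))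
            - ∑ k ∈ Finset.range (n - x),
            (-1 : ℝ) ^ k / ((Nat.factorial x : ℝ) * (Nat.factorial k : ℝ)) * mom G' (x + k)) + (r - r') := by
              ring
          rw [heq]; exact this
      _ ≤ _ := by
          have := abs_sub r r'
          linarith [abs_sub_abs_le_abs_sub r r']
  refine habs.trans ?_
  have hcomb : 2 * A ^ n * Real.exp A / ((Nat.factorial x : ℝ) * (Nat.factorial (n - x) : ℝ))
      + 2 * A ^ n * Real.exp A / ((Nat.factorial x : ℝ) * (Nat.factorial (n - x) : ℝ))
      = 4 * A ^ n * Real.exp A / ((Nat.factorial x : ℝ) * (Nat.factorial (n - x) : ℝ)) := by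
    ring
  linarith

end Stmt8

namespace Stmt8
variable {A : ℝ}

lemma hellSq_le (G G' : Prior A) (hA : 0 < A) (n : ℕ) (τ : ℝ)
    (hmom : ∀ j, j ≤ n - 1 → |mom G j - mom G' j| ≤ τ) :
    hellSq (mix G) (mix G') ≤ Real.exp 1 ^ 2 * τ
      + 6 * Real.exp A * (2 * A) ^ n / (Nat.factorial n : ℝ) := by
  have hτ : 0 ≤ τ := (abs_nonneg _).trans (hmom 0 (Nat.zero_le _))
  set h : ℕ → ℝ := fun x => (Real.sqrt (mix G x) - Real.sqrt (mix G' x)) ^ 2 with hh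
  have hnn : ∀ x, 0 ≤ h x := fun x => sq_nonneg _
  have hble : ∀ x, h x ≤ 2 * (A ^ x / (Nat.factorial x : ℝ)) := by
    intro x
    have h1 := sq_sub_sqrt_le_add (mix_nonneg G x) (mix_nonneg G' x)
    have h2 := mix_le G hA x
    have h3 := mix_le G' hA x
    simp only [hh]
    linarith
  have hsummable : Summable h :=
    Summable.of_nonneg_of_le hnn hble ((Real.summable_pow_div_factorial A).mul_left 2)
  have hsplit := Summable.sum_add_tsum_nat_add (f := h) n hsummable
  have hhell : hellSq (mix G) (mix G') = ∑' x, h x := rfl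
  rw [hhell, ← hsplit]
  -- head bound
  have hhead : ∑ x ∈ Finset.range n, h x ≤ Real.exp 1 ^ 2 * τ
      + 4 * Real.exp A * (2 * A) ^ n / (Nat.factorial n : ℝ) := by
    have hxb : ∀ x ∈ Finset.range n, h x ≤ Real.exp 1 * τ / (Nat.factorial x : ℝ)
        + 4 * A ^ n * Real.exp A / ((Nat.factorial x : ℝ) * (Nat.factorial (n - x) : ℝ)) := by
      intro x hxm
      have hx := Finset.mem_range.mp hxm
      have h1 := sq_sub_sqrt_le_abs (mix_nonneg G x) (mix_nonneg G' x)
      have h2 := mix_close G G' hA n x hx τ hmom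
      simp only [hh]
      exact h1.trans h2
    refine (Finset.sum_le_sum hxb).trans ?_
    rw [Finset.sum_add_distrib]
    have hA1 : ∑ x ∈ Finset.range n, Real.exp 1 * τ / (Nat.factorial x : ℝ)
        ≤ Real.exp 1 ^ 2 * τ := by
      have heq : ∑ x ∈ Finset.range n, Real.exp 1 * τ / (Nat.factorial x : ℝ)
          = Real.exp 1 * τ * ∑ x ∈ Finset.range n, (1:ℝ) / (Nat.factorial x : ℝ) := by
        rw [Finset.mul_sum]; exact Finset.sum_congr rfl fun x _ => by ring
      rw [heq]
      calc Real.exp 1 * τ * ∑ x ∈ Finset.range n, (1:ℝ) / (Nat.factorial x : ℝ)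
          ≤ Real.exp 1 * τ * Real.exp 1 :=
            mul_le_mul_of_nonneg_left (sum_inv_factorial_le n) (by positivity)
        _ = Real.exp 1 ^ 2 * τ := by ring
    have hA2 : ∑ x ∈ Finset.range n,
        4 * A ^ n * Real.exp A / ((Nat.factorial x : ℝ) * (Nat.factorial (n - x) : ℝ))
        ≤ 4 * Real.exp A * (2 * A) ^ n / (Nat.factorial n : ℝ) := by
      have hterm : ∀ x ∈ Finset.range n,
          4 * A ^ n * Real.exp A / ((Nat.factorial x : ℝ) * (Nat.factorial (n - x) : ℝ))
          = 4 * A ^ n * Real.exp A * ((Nat.choose n x : ℝ) / (Nat.factorial n : ℝ)) := by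
        intro x hxm
        have hx := (Finset.mem_range.mp hxm).le
        have hc := Nat.choose_mul_factorial_mul_factorial hx
        have hcR : (Nat.choose n x : ℝ) * (Nat.factorial x : ℝ) * (Nat.factorial (n - x) : ℝ)
            = (Nat.factorial n : ℝ) := by exact_mod_cast congrArg (Nat.cast : ℕ → ℝ) hc
        have hx0 : (0:ℝ) < (Nat.factorial x : ℝ) := by positivity
        have hnx0 : (0:ℝ) < (Nat.factorial (n - x) : ℝ) := by positivity
        have hn0 : (0:ℝ) < (Nat.factorial n : ℝ) := by positivity
        have key : (1:ℝ) / ((Nat.factorial x : ℝ) * (Nat.factorial (n - x) : ℝ))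
            = (Nat.choose n x : ℝ) / (Nat.factorial n : ℝ) := by
          rw [div_eq_div_iff (by positivity) hn0.ne']
          linear_combination -hcR
        calc 4 * A ^ n * Real.exp A / ((Nat.factorial x : ℝ) * (Nat.factorial (n - x) : ℝ))
            = 4 * A ^ n * Real.exp A * ((1:ℝ) / ((Nat.factorial x : ℝ) * (Nat.factorial (n - x) : ℝ))) := by
              ring
          _ = 4 * A ^ n * Real.exp A * ((Nat.choose n x : ℝ) / (Nat.factorial n : ℝ)) := by rw [key]
      rw [Finset.sum_congr rfl hterm]
      have heq2 : ∑ x ∈ Finset.range n,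
          4 * A ^ n * Real.exp A * ((Nat.choose n x : ℝ) / (Nat.factorial n : ℝ))
          = 4 * A ^ n * Real.exp A / (Nat.factorial n : ℝ) * ∑ x ∈ Finset.range n, (Nat.choose n x : ℝ) := by
        rw [Finset.mul_sum]; exact Finset.sum_congr rfl fun x _ => by ring
      rw [heq2]
      have hch : ∑ x ∈ Finset.range n, (Nat.choose n x : ℝ) ≤ 2 ^ n := by
        have h1 : ∑ x ∈ Finset.range n, Nat.choose n x ≤ ∑ x ∈ Finset.range (n+1), Nat.choose n x :=
          Finset.sum_le_sum_of_subset (Finset.range_subset_range.mpr (Nat.le_succ n))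
        have h2 := Nat.sum_range_choose n
        have : ∑ x ∈ Finset.range n, Nat.choose n x ≤ 2 ^ n := by omega
        exact_mod_cast this
      calc 4 * A ^ n * Real.exp A / (Nat.factorial n : ℝ) * ∑ x ∈ Finset.range n, (Nat.choose n x : ℝ)
          ≤ 4 * A ^ n * Real.exp A / (Nat.factorial n : ℝ) * 2 ^ n :=
            mul_le_mul_of_nonneg_left hch (by positivity)
        _ = 4 * Real.exp A * (2 * A) ^ n / (Nat.factorial n : ℝ) := by
            rw [mul_pow]; ring
    linarith
  -- tail bound
  have htail : ∑' x, h (x + n) ≤ 2 * Real.exp A * (2 * A) ^ n / (Nat.factorial n : ℝ) := by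
    have hs2 : Summable (fun x => h (x + n)) := (summable_nat_add_iff n).mpr hsummable
    have hsR : Summable (fun x : ℕ => 2 * (A ^ n / (Nat.factorial n : ℝ) * (A ^ x / (Nat.factorial x : ℝ)))) := by
      exact ((Real.summable_pow_div_factorial A).mul_left _).mul_left 2
    have hle2 : ∀ x : ℕ, h (x + n) ≤ 2 * (A ^ n / (Nat.factorial n : ℝ) * (A ^ x / (Nat.factorial x : ℝ))) := by
      intro x
      refine (hble (x + n)).trans ?_
      have := pow_div_factorial_add A hA.le x n
      linarith
    calc ∑' x, h (x + n) ≤ ∑' x : ℕ, 2 * (A ^ n / (Nat.factorial n : ℝ) * (A ^ x / (Nat.factorial x : ℝ))) :=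
          Summable.tsum_le_tsum hle2 hs2 hsR
      _ = 2 * (A ^ n / (Nat.factorial n : ℝ)) * ∑' x : ℕ, (A ^ x / (Nat.factorial x : ℝ)) := by
          rw [← tsum_mul_left]
          exact tsum_congr fun x => by ring
      _ ≤ 2 * (A ^ n / (Nat.factorial n : ℝ)) * Real.exp A := by
          apply mul_le_mul_of_nonneg_left _ (by positivity)
          apply Real.tsum_le_of_sum_range_le (fun x => by positivity)
          exact fun m => Real.sum_le_exp_of_nonneg hA.le m
      _ ≤ 2 * Real.exp A * (2 * A) ^ n / (Nat.factorial n : ℝ) := by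
          have hAn : A ^ n ≤ (2 * A) ^ n :=
            pow_le_pow_left₀ hA.le (by linarith) n
          have hn0 : (0:ℝ) < (Nat.factorial n : ℝ) := by positivity
          have e1 : 2 * (A ^ n / (Nat.factorial n : ℝ)) * Real.exp A
              = 2 * Real.exp A * A ^ n / (Nat.factorial n : ℝ) := by ring
          rw [e1]
          exact div_le_div_of_nonneg_right
            (mul_le_mul_of_nonneg_left hAn (by positivity)) hn0.le
  have hfin : 4 * Real.exp A * (2 * A) ^ n / (Nat.factorial n : ℝ)
      + 2 * Real.exp A * (2 * A) ^ n / (Nat.factorial n : ℝ)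
      = 6 * Real.exp A * (2 * A) ^ n / (Nat.factorial n : ℝ) := by ring
  linarith
end Stmt8

namespace Stmt8
variable {A : ℝ}

lemma abs_sub_le_of_floor_div_eq {a b τ : ℝ} (hτ : 0 < τ) (h : ⌊a / τ⌋ = ⌊b / τ⌋) :
    |a - b| ≤ τ := by
  have h1 : a / τ < (⌊b / τ⌋ : ℝ) + 1 := by rw [← h]; exact Int.lt_floor_add_one _
  have h2 : b / τ < (⌊a / τ⌋ : ℝ) + 1 := by rw [h]; exact Int.lt_floor_add_one _
  have h3 : (⌊a / τ⌋ : ℝ) ≤ a / τ := Int.floor_le _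
  have h4 : (⌊b / τ⌋ : ℝ) ≤ b / τ := Int.floor_le _
  have h5 : |a / τ - b / τ| ≤ 1 := abs_le.mpr ⟨by linarith, by linarith⟩
  have h6 : a - b = (a / τ - b / τ) * τ := by field_simp
  rw [h6, abs_mul, abs_of_pos hτ]
  calc |a / τ - b / τ| * τ ≤ 1 * τ := mul_le_mul_of_nonneg_right h5 hτ.le
    _ = τ := one_mul τ

lemma net_exists (hA : 0 < A) (τ : ℝ) (hτ : 0 < τ) (L : ℕ) (M : ℤ)
    (hM : ∀ (G : Prior A) (j : Fin L), ⌊mom G ((j : ℕ) + 1) / τ⌋ ∈ Finset.Icc (0 : ℤ) M) :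
    ∃ S : Finset (Prior A), S.card ≤ (M + 1).toNat ^ L ∧
      ∀ G : Prior A, ∃ G' ∈ S, ∀ j : ℕ, 1 ≤ j → j ≤ L → |mom G j - mom G' j| ≤ τ := by
  classical
  have hmem : (0 : ℝ) ∈ Set.Icc (0 : ℝ) A := ⟨le_refl 0, hA.le⟩
  let G₀ : Prior A := ⟨MeasureTheory.Measure.dirac ⟨0, hmem⟩, by infer_instance⟩
  let g : (Fin L → ℤ) → Prior A := fun v =>
    if h : ∃ G : Prior A, ∀ j : Fin L, ⌊mom G ((j : ℕ) + 1) / τ⌋ = v j then h.choose else G₀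
  refine ⟨Finset.image g (Fintype.piFinset fun _ : Fin L => Finset.Icc (0 : ℤ) M), ?_, ?_⟩
  · refine Finset.card_image_le.trans ?_
    rw [Fintype.card_piFinset]
    rw [Finset.prod_const, Int.card_Icc, Finset.card_univ, Fintype.card_fin]
    simp
  · intro G
    set v : Fin L → ℤ := fun j => ⌊mom G ((j : ℕ) + 1) / τ⌋ with hv
    have hvmem : v ∈ Fintype.piFinset fun _ : Fin L => Finset.Icc (0 : ℤ) M := by
      rw [Fintype.mem_piFinset]
      exact fun j => hM G j
    have hex : ∃ G'' : Prior A, ∀ j : Fin L, ⌊mom G'' ((j : ℕ) + 1) / τ⌋ = v j :=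
      ⟨G, fun j => rfl⟩
    refine ⟨g v, Finset.mem_image_of_mem g hvmem, ?_⟩
    have hspec : ∀ j : Fin L, ⌊mom (g v) ((j : ℕ) + 1) / τ⌋ = v j := by
      have : g v = hex.choose := dif_pos hex
      rw [this]
      exact hex.choose_spec
    intro j hj1 hjL
    obtain ⟨i, rfl⟩ : ∃ i : ℕ, j = i + 1 := ⟨j - 1, by omega⟩
    have hiL : i < L := by omega
    have := hspec ⟨i, hiL⟩
    simp only [hv] at this
    exact abs_sub_le_of_floor_div_eq hτ this.symm

end Stmt8

namespace Stmt8
variable {A : ℝ}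

lemma ell_gt {ε : ℝ} (hε : 0 < ε) (hε2 : ε < Real.exp (-Real.exp 1)) :
    Real.exp 1 < Real.log (1 / ε) := by
  rw [Real.lt_log_iff_exp_lt (by positivity)]
  rw [Real.exp_neg] at hε2
  rw [lt_div_iff₀ hε]
  have h := mul_lt_mul_of_pos_left hε2 (Real.exp_pos (Real.exp 1))
  rw [mul_inv_cancel₀ (Real.exp_pos _).ne'] at h
  linarith

lemma numeric (hA : 0 < A) {ε : ℝ} (hε : 0 < ε) (hε2 : ε < Real.exp (-Real.exp 1)) :
    ∃ n : ℕ, 1 ≤ n ∧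
      ((n : ℝ) * Real.log (Real.log (1 / ε)) ≤ (12 * A + 20) * Real.log (1 / ε)) ∧
      6 * Real.exp A * (2 * A) ^ n / (Nat.factorial n : ℝ) ≤ ε ^ 2 / 2 := by
  set ℓ := Real.log (1 / ε) with hℓdef
  have hℓe : Real.exp 1 < ℓ := ell_gt hε hε2
  have he1 : (2.7 : ℝ) < Real.exp 1 := by have := Real.exp_one_gt_d9; linarith
  have he0 : (0 : ℝ) < Real.exp 1 := Real.exp_pos 1
  have hℓ1 : 1 < ℓ := by linarith
  have hℓ0 : 0 < ℓ := by linarith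
  have hlogℓ : 1 < Real.log ℓ := by
    rw [Real.lt_log_iff_exp_lt hℓ0]; exact hℓe
  have hlogℓ0 : 0 < Real.log ℓ := by linarith
  set K : ℝ := 12 * A + 19 with hKdef
  have hK : 0 < K := by linarith
  set n : ℕ := ⌈K * ℓ / Real.log ℓ⌉₊ with hn
  have harg : 0 < K * ℓ / Real.log ℓ := div_pos (mul_pos hK hℓ0) hlogℓ0
  have hn0 : 0 < n := Nat.ceil_pos.mpr harg
  have hn1 : K * ℓ / Real.log ℓ ≤ (n : ℝ) := Nat.le_ceil _
  have hn2 : (n : ℝ) < K * ℓ / Real.log ℓ + 1 := Nat.ceil_lt_add_one harg.le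
  have hnpos : (0 : ℝ) < (n : ℝ) := by exact_mod_cast hn0
  clear_value ℓ K n
  refine ⟨n, hn0, ?_, ?_⟩
  · have h1 : (n : ℝ) * Real.log ℓ < (K * ℓ / Real.log ℓ + 1) * Real.log ℓ :=
      mul_lt_mul_of_pos_right hn2 hlogℓ0
    have h2 : (K * ℓ / Real.log ℓ + 1) * Real.log ℓ = K * ℓ + Real.log ℓ := by
      field_simp
    have h3 : Real.log ℓ ≤ ℓ := by
      have := Real.log_le_sub_one_of_pos hℓ0; linarith
    have h4 : (12 * A + 20) * ℓ = K * ℓ + ℓ := by rw [hKdef]; ring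
    linarith
  · have hsq : Real.sqrt ℓ * Real.sqrt ℓ = ℓ := Real.mul_self_sqrt hℓ0.le
    have hsqpos : 0 < Real.sqrt ℓ := Real.sqrt_pos.mpr hℓ0
    have hlog2 : Real.log ℓ ≤ 2 * Real.sqrt ℓ := by
      have h := Real.log_le_sub_one_of_pos hsqpos
      have h2 : Real.log (Real.sqrt ℓ) = Real.log ℓ / 2 := Real.log_sqrt hℓ0.le
      linarith
    have hnsq : K * Real.sqrt ℓ / 2 ≤ (n : ℝ) := by
      refine le_trans ?_ hn1
      rw [div_le_div_iff₀ (by norm_num) hlogℓ0]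
      calc K * Real.sqrt ℓ * Real.log ℓ
          ≤ K * Real.sqrt ℓ * (2 * Real.sqrt ℓ) :=
            mul_le_mul_of_nonneg_left hlog2 (by positivity)
        _ = 2 * K * (Real.sqrt ℓ * Real.sqrt ℓ) := by ring
        _ = K * ℓ * 2 := by rw [hsq]; ring
    have hbase : 2 * A * Real.exp 1 ≤ K / 2 := by
      have he2 : Real.exp 1 < 2.8 := by
        have := Real.exp_one_lt_d9; linarith
      nlinarith
    have hb2 : 2 * A * Real.exp 1 / (n : ℝ) ≤ 1 / Real.sqrt ℓ := by
      rw [div_le_div_iff₀ hnpos hsqpos]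
      calc 2 * A * Real.exp 1 * Real.sqrt ℓ
          ≤ K / 2 * Real.sqrt ℓ := mul_le_mul_of_nonneg_right hbase hsqpos.le
        _ = K * Real.sqrt ℓ / 2 := by ring
        _ ≤ (n : ℝ) := hnsq
        _ = 1 * (n : ℝ) := (one_mul _).symm
    have hbpos : 0 < 2 * A * Real.exp 1 / (n : ℝ) := by positivity
    have hlogb : Real.log (2 * A * Real.exp 1 / (n : ℝ)) ≤ -(Real.log ℓ / 2) := by
      have hmono := Real.log_le_log hbpos hb2
      have h2 : Real.log (1 / Real.sqrt ℓ) = -(Real.log ℓ / 2) := by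
        rw [one_div, Real.log_inv, Real.log_sqrt hℓ0.le]
      linarith
    have hmain : (n : ℝ) * Real.log (2 * A * Real.exp 1 / (n : ℝ)) ≤ -(2 * ℓ + A + 3) := by
      have h1 : (n : ℝ) * Real.log (2 * A * Real.exp 1 / (n : ℝ))
          ≤ (n : ℝ) * (-(Real.log ℓ / 2)) :=
        mul_le_mul_of_nonneg_left hlogb hnpos.le
      have h2 : K * ℓ ≤ (n : ℝ) * Real.log ℓ := by
        rw [div_le_iff₀ hlogℓ0] at hn1; linarith
      have h3 : (n : ℝ) * (-(Real.log ℓ / 2)) = -((n : ℝ) * Real.log ℓ) / 2 := by ring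
      have h4 : 2 * ℓ + A + 3 ≤ K * ℓ / 2 := by nlinarith
      rw [h3] at h1
      calc (n : ℝ) * Real.log (2 * A * Real.exp 1 / (n : ℝ))
          ≤ -((n : ℝ) * Real.log ℓ) / 2 := h1
        _ ≤ -(K * ℓ) / 2 := by linarith
        _ ≤ -(2 * ℓ + A + 3) := by linarith
    have hfact : ((n : ℝ)) ^ n ≤ (Nat.factorial n : ℝ) * Real.exp 1 ^ n := by
      have hmem : n ∈ Finset.range (n + 1) := Finset.self_mem_range_succ n
      have hs := Finset.single_le_sum
        (f := fun i => ((n : ℝ)) ^ i / (Nat.factorial i : ℝ))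
        (fun i _ => by positivity) hmem
      have hterm : ((n : ℝ)) ^ n / (Nat.factorial n : ℝ) ≤ Real.exp (n : ℝ) :=
        hs.trans (Real.sum_le_exp_of_nonneg (by positivity) (n + 1))
      rw [div_le_iff₀ (by positivity)] at hterm
      calc ((n : ℝ)) ^ n ≤ Real.exp (n : ℝ) * (Nat.factorial n : ℝ) := hterm
        _ = (Nat.factorial n : ℝ) * Real.exp 1 ^ n := by rw [← Real.exp_one_pow]; ring
    have hstep1 : (2 * A) ^ n / (Nat.factorial n : ℝ) ≤ (2 * A * Real.exp 1 / (n : ℝ)) ^ n := by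
      rw [div_pow, div_le_div_iff₀ (by positivity) (by positivity)]
      calc (2 * A) ^ n * (n : ℝ) ^ n
          ≤ (2 * A) ^ n * ((Nat.factorial n : ℝ) * Real.exp 1 ^ n) :=
            mul_le_mul_of_nonneg_left hfact (by positivity)
        _ = (2 * A * Real.exp 1) ^ n * (Nat.factorial n : ℝ) := by
            rw [mul_pow]; ring
    have hstep2 : (2 * A * Real.exp 1 / (n : ℝ)) ^ n ≤ Real.exp (-(2 * ℓ + A + 3)) := by
      have heq : (2 * A * Real.exp 1 / (n : ℝ)) ^ n
          = Real.exp ((n : ℝ) * Real.log (2 * A * Real.exp 1 / (n : ℝ))) := by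
        rw [Real.exp_nat_mul, Real.exp_log hbpos]
      rw [heq]
      exact Real.exp_le_exp.mpr hmain
    have hexpε : Real.exp (-(2 * ℓ)) = ε ^ 2 := by
      have hlogε : Real.log ε = -ℓ := by rw [hℓdef, one_div, Real.log_inv]; ring
      have h2 : -(2 * ℓ) = Real.log ε + Real.log ε := by rw [hlogε]; ring
      rw [h2, Real.exp_add, Real.exp_log hε]; ring
    have hexp3 : Real.exp (-3 : ℝ) ≤ 1 / 12 := by
      have h3 : Real.exp 1 ^ 3 = Real.exp (3 : ℝ) := by
        have := Real.exp_one_pow 3; rw [this]; norm_num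
      have h12 : (12 : ℝ) ≤ Real.exp (3 : ℝ) := by
        have hc : (2.7 : ℝ) ^ 3 ≤ Real.exp 1 ^ 3 := pow_le_pow_left₀ (by norm_num) he1.le 3
        have : (19 : ℝ) ≤ (2.7 : ℝ)^3 := by norm_num
        linarith [h3 ▸ hc]
      rw [Real.exp_neg]
      calc (Real.exp (3:ℝ))⁻¹ ≤ (12 : ℝ)⁻¹ :=
          inv_anti₀ (by norm_num) h12
        _ = 1 / 12 := by norm_num
    calc 6 * Real.exp A * (2 * A) ^ n / (Nat.factorial n : ℝ)
        = 6 * Real.exp A * ((2 * A) ^ n / (Nat.factorial n : ℝ)) := by ring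
      _ ≤ 6 * Real.exp A * Real.exp (-(2 * ℓ + A + 3)) := by
          apply mul_le_mul_of_nonneg_left (hstep1.trans hstep2) (by positivity)
      _ = 6 * Real.exp (-3 : ℝ) * ε ^ 2 := by
          rw [mul_assoc, ← Real.exp_add]
          have h5 : A + -(2 * ℓ + A + 3) = -(2 * ℓ) + (-3 : ℝ) := by ring
          rw [h5, Real.exp_add, hexpε]; ring
      _ ≤ ε ^ 2 / 2 := by
          have := mul_le_mul_of_nonneg_right hexp3 (sq_nonneg ε)
          linarith

end Stmt8

open Stmt8 in
/-- metric entropy bound for the class of Poisson mixtures with priors on `[0,A]`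
under the Hellinger metric: `log N(ε) ≤ C log²(1/ε) / log log(1/ε)`. -/
theorem stmt_8 (A : ℝ) (hA : 0 < A) :
    ∃ C : ℝ, 0 < C ∧ ∀ ε : ℝ, 0 < ε → ε < Real.exp (-Real.exp 1) →
      ∃ S : Finset (Prior A),
        (S.card : ℝ) ≤ Real.exp (C * (Real.log (1 / ε)) ^ 2 / Real.log (Real.log (1 / ε))) ∧
        ∀ G : Prior A, ∃ G' ∈ S, Real.sqrt (hellSq (mix G) (mix G')) ≤ ε := by
  classical
  set P : ℝ := 2 * A + 2 with hPdef
  have hP1 : 1 < P := by simp only [hPdef]; linarith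
  have hP0 : 0 < P := by linarith
  have hlogP : 0 < Real.log P := Real.log_pos hP1
  set Kp : ℝ := 12 * A + 20 with hKpdef
  have hKp0 : 0 < Kp := by simp only [hKpdef]; linarith
  have hC0 : 0 < Kp * (Kp * Real.log P + 6) := by positivity
  refine ⟨Kp * (Kp * Real.log P + 6), hC0, ?_⟩
  intro ε hε hε2
  set ℓ := Real.log (1 / ε) with hℓdef
  have hℓe : Real.exp 1 < ℓ := ell_gt hε hε2
  have he1 : (2.7 : ℝ) < Real.exp 1 := by have := Real.exp_one_gt_d9; linarith
  have hℓ1 : 1 < ℓ := by linarith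
  have hℓ0 : 0 < ℓ := by linarith
  have hlogℓ : 1 < Real.log ℓ := by rw [Real.lt_log_iff_exp_lt hℓ0]; exact hℓe
  have hlogℓ0 : 0 < Real.log ℓ := by linarith
  obtain ⟨n, hn1, hnlog, hnfact⟩ := numeric hA hε hε2
  rw [← hℓdef] at hnlog
  have hnlog' : (n : ℝ) * Real.log ℓ ≤ Kp * ℓ := by rw [hKpdef]; exact hnlog
  have hn0' : (0:ℝ) ≤ (n:ℝ) := Nat.cast_nonneg n
  have hnKp : (n : ℝ) ≤ Kp * ℓ := by nlinarith
  set τ : ℝ := ε ^ 2 / (2 * Real.exp 1 ^ 2) with hτdef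
  have hτ0 : 0 < τ := by positivity
  have hε1 : ε < 1 := by
    have h := Real.exp_lt_one_iff.mpr (show -Real.exp 1 < 0 by
      have := Real.exp_pos 1; linarith)
    linarith
  have hτ1 : τ ≤ 1 := by
    rw [hτdef, div_le_one (by positivity)]
    nlinarith
  set L : ℕ := n - 1 with hLdef
  have hLn : (L : ℝ) ≤ (n : ℝ) := by exact_mod_cast Nat.sub_le n 1
  have hPL1 : (1:ℝ) ≤ P ^ L := one_le_pow₀ hP1.le
  have hPLτ : (1:ℝ) ≤ P ^ L / τ := by
    rw [le_div_iff₀ hτ0]; nlinarith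
  set M : ℤ := ⌊P ^ L / τ⌋ with hMdef
  have hM1 : (1:ℤ) ≤ M := by
    rw [hMdef]
    exact_mod_cast Int.le_floor.mpr (by exact_mod_cast hPLτ)
  have hMmem : ∀ (G : Prior A) (j : Fin L), ⌊mom G ((j : ℕ) + 1) / τ⌋ ∈ Finset.Icc (0 : ℤ) M := by
    intro G j
    rw [Finset.mem_Icc]
    constructor
    · exact Int.floor_nonneg.mpr (div_nonneg (mom_nonneg G _) hτ0.le)
    · apply Int.floor_le_floor
      apply div_le_div_of_nonneg_right ?_ hτ0.le
      calc mom G ((j : ℕ) + 1) ≤ A ^ ((j : ℕ) + 1) := mom_le G hA _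
        _ ≤ P ^ ((j : ℕ) + 1) := pow_le_pow_left₀ hA.le (by simp only [hPdef]; linarith) _
        _ ≤ P ^ L := pow_le_pow_right₀ hP1.le (by omega)
  obtain ⟨S, hcard, hcover⟩ := net_exists hA τ hτ0 L M hMmem
  refine ⟨S, ?_, ?_⟩
  · -- cardinality bound
    have hMreal : ((M + 1).toNat : ℝ) = (M : ℝ) + 1 := by
      have h := Int.toNat_of_nonneg (show (0:ℤ) ≤ M + 1 by omega)
      exact_mod_cast congrArg (Int.cast : ℤ → ℝ) h
    have hfloor : (M : ℝ) ≤ P ^ L / τ := Int.floor_le _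
    have hb1 : ((M + 1).toNat : ℝ) ≤ 2 * (P ^ L / τ) := by
      rw [hMreal]; linarith
    have hbpos : (0:ℝ) < 2 * (P ^ L / τ) := by linarith
    have hcard2 : (S.card : ℝ) ≤ (2 * (P ^ L / τ)) ^ L := by
      calc (S.card : ℝ) ≤ (((M + 1).toNat ^ L : ℕ) : ℝ) := by exact_mod_cast hcard
        _ = ((M + 1).toNat : ℝ) ^ L := by push_cast; ring
        _ ≤ (2 * (P ^ L / τ)) ^ L := pow_le_pow_left₀ (by positivity) hb1 L
    -- rewrite as exponential
    have hbeq : (2 * (P ^ L / τ)) ^ L = Real.exp ((L:ℝ) * Real.log (2 * (P ^ L / τ))) := by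
      rw [Real.exp_nat_mul, Real.exp_log hbpos]
    -- compute/bound the log
    have hlog2 : Real.log 2 ≤ 1 := by
      have h2e : (2:ℝ) ≤ Real.exp 1 := by linarith
      calc Real.log 2 ≤ Real.log (Real.exp 1) := Real.log_le_log (by norm_num) h2e
        _ = 1 := Real.log_exp 1
    have hlogτ : Real.log τ = -(2*ℓ) - (Real.log 2 + 2) := by
      rw [hτdef, Real.log_div (by positivity) (by positivity),
        Real.log_mul (by norm_num) (by positivity), Real.log_pow, Real.log_pow, Real.log_exp]
      have hlogε : Real.log ε = -ℓ := by rw [hℓdef, one_div, Real.log_inv]; ring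
      rw [hlogε]; push_cast; ring
    have hlogb_le : Real.log (2 * (P ^ L / τ)) ≤ (n:ℝ) * Real.log P + 2*ℓ + 4 := by
      rw [Real.log_mul (by norm_num) (by positivity),
        Real.log_div (by positivity) hτ0.ne', Real.log_pow, hlogτ]
      have hLP : (L:ℝ) * Real.log P ≤ (n:ℝ) * Real.log P :=
        mul_le_mul_of_nonneg_right hLn hlogP.le
      linarith
    have hlogb0 : 0 ≤ Real.log (2 * (P ^ L / τ)) := Real.log_nonneg (by linarith)
    calc (S.card : ℝ) ≤ (2 * (P ^ L / τ)) ^ L := hcard2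
      _ = Real.exp ((L:ℝ) * Real.log (2 * (P ^ L / τ))) := hbeq
      _ ≤ Real.exp (Kp * (Kp * Real.log P + 6) * ℓ ^ 2 / Real.log ℓ) := by
          apply Real.exp_le_exp.mpr
          rw [le_div_iff₀ hlogℓ0]
          calc (L:ℝ) * Real.log (2 * (P ^ L / τ)) * Real.log ℓ
              ≤ (n:ℝ) * ((n:ℝ) * Real.log P + 2*ℓ + 4) * Real.log ℓ := by
                apply mul_le_mul_of_nonneg_right _ hlogℓ0.le
                exact mul_le_mul hLn hlogb_le hlogb0 hn0'
            _ = ((n:ℝ) * Real.log ℓ) * ((n:ℝ) * Real.log P + 2*ℓ + 4) := by ring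
            _ ≤ (Kp * ℓ) * ((n:ℝ) * Real.log P + 2*ℓ + 4) := by
                apply mul_le_mul_of_nonneg_right hnlog'
                have : 0 ≤ (n:ℝ) * Real.log P := by positivity
                linarith
            _ ≤ (Kp * ℓ) * ((Kp * ℓ) * Real.log P + 2*ℓ + 4*ℓ) := by
                apply mul_le_mul_of_nonneg_left _ (by positivity)
                have h1 : (n:ℝ) * Real.log P ≤ (Kp*ℓ) * Real.log P :=
                  mul_le_mul_of_nonneg_right hnKp hlogP.le
                linarith
            _ = Kp * (Kp * Real.log P + 6) * ℓ ^ 2 := by ring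
  · -- covering
    intro G
    obtain ⟨G', hG'S, hclose⟩ := hcover G
    refine ⟨G', hG'S, ?_⟩
    have hmom : ∀ j, j ≤ n - 1 → |mom G j - mom G' j| ≤ τ := by
      intro j hj
      rcases Nat.eq_zero_or_pos j with h0 | hpos
      · subst h0
        rw [mom_zero, mom_zero, sub_self, abs_zero]
        exact hτ0.le
      · exact hclose j hpos (by omega)
    have hhell := hellSq_le G G' hA n τ hmom
    have he2τ : Real.exp 1 ^ 2 * τ = ε ^ 2 / 2 := by
      rw [hτdef]
      field_simp
    rw [← hℓdef] at *
    have hle : hellSq (mix G) (mix G') ≤ ε ^ 2 := by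
      rw [he2τ] at hhell
      linarith
    calc Real.sqrt (hellSq (mix G) (mix G')) ≤ Real.sqrt (ε ^ 2) := Real.sqrt_le_sqrt hle
      _ = ε := Real.sqrt_sq hε.le


end
end

section
/- Let P and Q be probability measures on a measurable space that are mutually absolutely continuous. Then ∫ (exp(|log(dP/dQ)|) − 1 − |log(dP/dQ)|) dQ ≤ χ²(Q‖P), where χ²(Q‖P) = ∫ (dQ/dP)² dP − 1 and both sides take values in [0,∞]. -/
/-!
With `t = log (dP/dQ)`, the bound `e^{-|t|} ≥ 1 - |t|` gives pointwise
`e^{|t|} - 1 - |t| + 2 ≤ e^{|t|} + e^{-|t|} = dP/dQ + (dP/dQ)⁻¹`.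
Integrating against `Q`, the first term has mass at most `1`, and the second is
`∫ dQ/dP dQ = ∫ (dQ/dP)² dP = χ²(Q‖P) + 1`.
-/

open MeasureTheory Real
open scoped ENNReal

lemma exp_abs_log_sub_one_sub_abs_log_add_two_le {x : ℝ} (hx : 0 < x) :
    exp |log x| - 1 - |log x| + 2 ≤ x + x⁻¹ := by
  have hsum : exp |log x| + exp (-|log x|) = x + x⁻¹ := by
    rcases abs_cases (log x) with ⟨h, _⟩ | ⟨h, _⟩ <;>
      simp [h, exp_neg, exp_log hx, add_comm]
  linarith [add_one_le_exp (-|log x|)]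

lemma ENNReal.ofReal_exp_abs_log_sub_one_sub_abs_log_add_two_le {r : ℝ≥0∞} (h0 : r ≠ 0)
    (htop : r ≠ ∞) :
    ENNReal.ofReal (exp |Real.log r.toReal| - 1 - |Real.log r.toReal|) + 2 ≤ r + r⁻¹ := by
  have hx : 0 < r.toReal := ENNReal.toReal_pos h0 htop
  have hnonneg : 0 ≤ exp |Real.log r.toReal| - 1 - |Real.log r.toReal| := by
    linarith [add_one_le_exp |Real.log r.toReal|]
  calc ENNReal.ofReal (exp |Real.log r.toReal| - 1 - |Real.log r.toReal|) + 2
      = ENNReal.ofReal (exp |Real.log r.toReal| - 1 - |Real.log r.toReal| + 2) := by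
        rw [ENNReal.ofReal_add hnonneg zero_le_two, ENNReal.ofReal_ofNat]
    _ ≤ ENNReal.ofReal (r.toReal + r.toReal⁻¹) :=
        ENNReal.ofReal_le_ofReal (exp_abs_log_sub_one_sub_abs_log_add_two_le hx)
    _ = r + r⁻¹ := by
        rw [ENNReal.ofReal_add hx.le (inv_pos.mpr hx).le, ENNReal.ofReal_toReal htop,
          ← ENNReal.toReal_inv, ENNReal.ofReal_toReal (ENNReal.inv_ne_top.mpr h0)]

lemma MeasureTheory.Measure.lintegral_rnDeriv_sq_eq_lintegral_inv_rnDeriv {α : Type*}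
    [MeasurableSpace α] {μ ν : Measure α} [SigmaFinite μ] [SigmaFinite ν]
    (hνμ : ν ≪ μ) :
    ∫⁻ a, ν.rnDeriv μ a ^ 2 ∂μ = ∫⁻ a, (μ.rnDeriv ν a)⁻¹ ∂ν := by
  calc ∫⁻ a, ν.rnDeriv μ a ^ 2 ∂μ = ∫⁻ a, ν.rnDeriv μ a * ν.rnDeriv μ a ∂μ := by
        simp only [sq]
    _ = ∫⁻ a, ν.rnDeriv μ a ∂ν :=
        lintegral_rnDeriv_mul hνμ (measurable_rnDeriv ν μ).aemeasurable
    _ = ∫⁻ a, (μ.rnDeriv ν a)⁻¹ ∂ν := lintegral_congr_ae (inv_rnDeriv' hνμ).symm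

theorem stmt_17_general {α : Type*} [MeasurableSpace α] (P Q : Measure α)
    [IsProbabilityMeasure P] [IsProbabilityMeasure Q]
    (hQP : Q ≪ P) :
    (∫⁻ a, ENNReal.ofReal
        (Real.exp |Real.log (P.rnDeriv Q a).toReal|
          - 1 - |Real.log (P.rnDeriv Q a).toReal|) ∂Q) ≤
      (∫⁻ a, (Q.rnDeriv P a) ^ 2 ∂P) - 1 := by
  set r := P.rnDeriv Q
  set f : α → ℝ≥0∞ := fun a ↦
    ENNReal.ofReal (exp |log (r a).toReal| - 1 - |log (r a).toReal|)
  have hpointwise : ∀ᵐ a ∂Q, f a + 2 ≤ r a + (r a)⁻¹ := by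
    filter_upwards [Measure.rnDeriv_pos' hQP, Measure.rnDeriv_lt_top P Q] with a h0 htop
    exact ENNReal.ofReal_exp_abs_log_sub_one_sub_abs_log_add_two_le h0.ne' htop.ne
  have hbound : ∫⁻ a, f a ∂Q + 1 + 1 ≤ ∫⁻ a, Q.rnDeriv P a ^ 2 ∂P + 1 :=
    calc ∫⁻ a, f a ∂Q + 1 + 1 = ∫⁻ a, f a + 2 ∂Q := by
          rw [lintegral_add_right _ measurable_const, lintegral_const, measure_univ,
            add_assoc, one_add_one_eq_two, mul_one]
      _ ≤ ∫⁻ a, r a + (r a)⁻¹ ∂Q := lintegral_mono_ae hpointwise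
      _ = ∫⁻ a, r a ∂Q + ∫⁻ a, (r a)⁻¹ ∂Q :=
          lintegral_add_left (Measure.measurable_rnDeriv P Q) _
      _ ≤ 1 + ∫⁻ a, (r a)⁻¹ ∂Q := by
          gcongr
          exact Measure.lintegral_rnDeriv_le.trans_eq measure_univ
      _ = ∫⁻ a, Q.rnDeriv P a ^ 2 ∂P + 1 := by
          rw [Measure.lintegral_rnDeriv_sq_eq_lintegral_inv_rnDeriv hQP, add_comm]
  exact ENNReal.le_sub_of_add_le_right ENNReal.one_ne_top
    ((ENNReal.add_le_add_iff_right ENNReal.one_ne_top).mp hbound)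

/-- for mutually absolutely continuous probability measures `P`, `Q`,
`∫ (e^{|log(dP/dQ)|} - 1 - |log(dP/dQ)|) dQ ≤ χ²(Q‖P)`, where
`χ²(Q‖P) = ∫ (dQ/dP)² dP - 1`; both sides are valued in `[0, ∞]`. -/
theorem stmt_17 {α : Type*} [MeasurableSpace α] (P Q : Measure α)
    [IsProbabilityMeasure P] [IsProbabilityMeasure Q]
    (hPQ : P ≪ Q) (hQP : Q ≪ P) :
    (∫⁻ a, ENNReal.ofReal
        (Real.exp |Real.log (P.rnDeriv Q a).toReal|
          - 1 - |Real.log (P.rnDeriv Q a).toReal|) ∂Q) ≤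
      (∫⁻ a, (Q.rnDeriv P a) ^ 2 ∂P) - 1 :=
  stmt_17_general P Q hQP
end
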